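/- arXiv:1605.02866 — 11 statements merged into one kernel-verified Lean document; each statement's English description precedes it below -/
import Mathlib

section
/- If G is a K_{1,3}-free graph and C is a proper coloring of G, then every connected component of the subgraph of G induced by the union of two color classes is either a path or a cycle. -/
open SimpleGraph

/-- The claw `K_{1,3}`. -/
def claw : SimpleGraph (Fin 1 ⊕ Fin 3) := completeBipartiteGraph (Fin 1) (Fin 3)

/-- The graph `(K_2 ∪ K_1) + K_2`: vertices `3,4` are adjacent to everything,
`0,1` are adjacent, and `2` is adjacent only to `3,4`. -/
def kkJoin : SimpleGraph (Fin 5) := SimpleGraph.fromEdgeSet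
  {s(0,1), s(3,4), s(0,3), s(0,4), s(1,3), s(1,4), s(2,3), s(2,4)}

/-- `G` has no induced subgraph isomorphic to `H`. -/
def Free {W V : Type*} (H : SimpleGraph W) (G : SimpleGraph V) : Prop := IsEmpty (H ↪g G)

noncomputable def maxDeg {V : Type*} [Fintype V] (G : SimpleGraph V) : ℕ := by
  classical exact G.maxDegree

noncomputable def deg {V : Type*} [Fintype V] (G : SimpleGraph V) (v : V) : ℕ := by
  classical exact G.degree v

/-- A graph is a path graph. -/
def IsPathGraph {V : Type*} (G : SimpleGraph V) : Prop := ∃ n, Nonempty (G ≃g pathGraph n)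

/-- A graph is a cycle graph. -/
def IsCycleGraph {V : Type*} (G : SimpleGraph V) : Prop :=
  ∃ n, 3 ≤ n ∧ Nonempty (G ≃g cycleGraph n)

/-! In a claw-free graph, the neighbours of a vertex inside the union of two colour classes all
carry the one colour the vertex does not have, so they are pairwise non-adjacent; hence there are
at most two of them. A component of the two-coloured subgraph is therefore a finite connected graph
in which every vertex has at most two neighbours. In such a graph a longest path cannot be extended
at either end, and its interior vertices already have both of their neighbours on it, so it spans
the graph, and its only possible chord joins its two ends: the graph is the path itself, or the
cycle closed by that chord. -/

namespace SimpleGraph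

variable {W : Type*} {H : SimpleGraph W}

-- Maximum degree at most two, phrased without `degree` so that no finiteness or decidability
-- instances are needed.
def AtMostTwoNeighbors (H : SimpleGraph W) : Prop :=
  ∀ ⦃v x y z : W⦄, H.Adj v x → H.Adj v y → H.Adj v z → x = y ∨ x = z ∨ y = z

theorem AtMostTwoNeighbors.induce (hdeg : H.AtMostTwoNeighbors) (s : Set W) :
    (H.induce s).AtMostTwoNeighbors := fun _ _ _ _ hx hy hz => by
  simpa only [Subtype.ext_iff, Function.Embedding.coe_subtype] using hdeg hx hy hz

theorem cycleGraph_adj_iff_val {n : ℕ} (hn : 2 ≤ n) {u v : Fin n} :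
    (cycleGraph n).Adj u v ↔ u.val + 1 = v.val ∨ v.val + 1 = u.val ∨
      (u.val = 0 ∧ v.val = n - 1) ∨ (v.val = 0 ∧ u.val = n - 1) := by
  have hu := u.isLt
  have hv := v.isLt
  rw [cycleGraph_adj']
  rcases lt_trichotomy u v with h | rfl | h
  · rw [Fin.coe_sub_iff_lt.mpr h, Fin.coe_sub_iff_le.mpr h.le]
    rw [Fin.lt_def] at h
    omega
  · rw [Fin.coe_sub_iff_le.mpr le_rfl]
    omega
  · rw [Fin.coe_sub_iff_le.mpr h.le, Fin.coe_sub_iff_lt.mpr h]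
    rw [Fin.lt_def] at h
    omega

theorem AtMostTwoNeighbors.eq_getElem_or_eq_getElem_of_adj (hdeg : H.AtMostTwoNeighbors)
    {l : List W} (hc : l.IsChain H.Adj) (hn : l.Nodup) {i : ℕ} (hi : i + 2 < l.length) {y : W}
    (hy : H.Adj l[i + 1] y) : y = l[i] ∨ y = l[i + 2] := by
  have hprev : H.Adj l[i + 1] l[i] := (List.isChain_iff_getElem.mp hc i (by omega)).symm
  have hnext : H.Adj l[i + 1] l[i + 2] := List.isChain_iff_getElem.mp hc (i + 1) hi
  rcases hdeg hprev hnext hy with h | h | h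
  · simp [hn.getElem_inj_iff] at h
  · exact .inl h.symm
  · exact .inr h.symm

theorem AtMostTwoNeighbors.eq_ends_of_adj_getElem (hdeg : H.AtMostTwoNeighbors)
    {l : List W} (hc : l.IsChain H.Adj) (hn : l.Nodup) {i j : ℕ} (hj : j < l.length)
    (hij : i + 1 < j) (hadj : H.Adj l[i] l[j]) : i = 0 ∧ j = l.length - 1 := by
  constructor
  · cases i with
    | zero => rfl
    | succ i =>
      rcases hdeg.eq_getElem_or_eq_getElem_of_adj hc hn (by omega) hadj with h | h <;>
        simp only [hn.getElem_inj_iff] at h <;> omega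
  · by_contra hne
    obtain ⟨k, rfl⟩ : ∃ k, j = k + 1 := ⟨j - 1, by omega⟩
    rcases hdeg.eq_getElem_or_eq_getElem_of_adj hc hn (by omega) hadj.symm with h | h <;>
      simp only [hn.getElem_inj_iff] at h <;> omega

theorem adj_getElem_iff_of_isChain {l : List W} (hc : l.IsChain H.Adj) {i j : ℕ}
    (hi : i < l.length) (hj : j < l.length) :
    H.Adj l[i] l[j] ↔ i + 1 = j ∨ j + 1 = i ∨
      (i + 1 < j ∧ H.Adj l[i] l[j]) ∨ (j + 1 < i ∧ H.Adj l[j] l[i]) := by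
  constructor
  · intro hadj
    rcases lt_trichotomy (i + 1) j with h | h | h
    · exact .inr (.inr (.inl ⟨h, hadj⟩))
    · exact .inl h
    rcases lt_trichotomy (j + 1) i with h' | h' | h'
    · exact .inr (.inr (.inr ⟨h', hadj.symm⟩))
    · exact .inr (.inl h')
    · obtain rfl : i = j := by omega
      exact (H.irrefl hadj).elim
  · rintro (rfl | rfl | ⟨-, h⟩ | ⟨-, h⟩)
    · exact List.isChain_iff_getElem.mp hc i hj
    · exact (List.isChain_iff_getElem.mp hc j hi).symm
    · exact h
    · exact h.symm

theorem nonempty_iso_of_adj_getElem_iff {l : List W} (hn : l.Nodup) (hcov : ∀ w, w ∈ l)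
    {F : SimpleGraph (Fin l.length)}
    (hadj : ∀ i j : Fin l.length, H.Adj l[(i : ℕ)] l[(j : ℕ)] ↔ F.Adj i j) :
    Nonempty (H ≃g F) := by
  classical
  exact ⟨RelIso.symm ⟨hn.getEquivOfForallMemList l hcov, hadj _ _⟩⟩

theorem isPathGraph_of_isChain {l : List W} (hc : l.IsChain H.Adj) (hn : l.Nodup)
    (hcov : ∀ w, w ∈ l)
    (hchord : ∀ (i j : ℕ) (hij : i + 1 < j) (hj : j < l.length), ¬ H.Adj l[i] l[j]) :
    IsPathGraph H :=
  ⟨l.length, nonempty_iso_of_adj_getElem_iff hn hcov fun i j => by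
    rw [adj_getElem_iff_of_isChain hc i.isLt j.isLt, pathGraph_adj]
    have := hchord i j
    have := hchord j i
    tauto⟩

theorem isCycleGraph_of_isChain {l : List W} (hc : l.IsChain H.Adj) (hn : l.Nodup)
    (hcov : ∀ w, w ∈ l) (hlen : 3 ≤ l.length) (hclose : H.Adj l[0] l[l.length - 1])
    (hchord : ∀ (i j : ℕ) (hij : i + 1 < j) (hj : j < l.length), H.Adj l[i] l[j] →
      i = 0 ∧ j = l.length - 1) :
    IsCycleGraph H :=
  have hchord_iff (a b : ℕ) (ha : a < l.length) (hb : b < l.length) :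
      (a + 1 < b ∧ H.Adj l[a] l[b]) ↔ (a = 0 ∧ b = l.length - 1) := by
    constructor
    · exact fun ⟨hab, h⟩ => hchord a b hab hb h
    · rintro ⟨rfl, rfl⟩
      exact ⟨by omega, hclose⟩
  ⟨l.length, hlen, nonempty_iso_of_adj_getElem_iff hn hcov fun i j => by
    rw [adj_getElem_iff_of_isChain hc i.isLt j.isLt, cycleGraph_adj_iff_val (by omega),
      hchord_iff i j i.isLt j.isLt, hchord_iff j i j.isLt i.isLt]⟩

variable (H) in
theorem exists_isChain_nodup_length_maximal [Finite W] :
    ∃ l : List W, l.IsChain H.Adj ∧ l.Nodup ∧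
      ∀ l' : List W, l'.IsChain H.Adj → l'.Nodup → l'.length ≤ l.length := by
  have := Fintype.ofFinite W
  have hfin : {l : List W | l.IsChain H.Adj ∧ l.Nodup}.Finite :=
    (List.finite_length_le W (Fintype.card W)).subset fun l hl => hl.2.length_le_card
  obtain ⟨l, ⟨hc, hn⟩, hmax⟩ :=
    Set.exists_max_image _ List.length hfin ⟨[], List.IsChain.nil, List.nodup_nil⟩
  exact ⟨l, hc, hn, fun l' hc' hn' => hmax l' ⟨hc', hn'⟩⟩

section LengthMaximal

variable {l : List W} (hc : l.IsChain H.Adj) (hn : l.Nodup)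
  (hmax : ∀ l' : List W, l'.IsChain H.Adj → l'.Nodup → l'.length ≤ l.length)
include hc hn hmax

theorem mem_of_adj_getElem_zero_of_length_maximal (hl : 0 < l.length) {y : W}
    (hy : H.Adj l[0] y) : y ∈ l := by
  by_contra hyl
  cases l with
  | nil => simp at hl
  | cons a t =>
    have := hmax (y :: a :: t) (hc.cons fun x hx => by simp_all [H.adj_comm])
      (List.nodup_cons.mpr ⟨hyl, hn⟩)
    simp at this

theorem mem_of_adj_getElem_last_of_length_maximal {i : ℕ} (hi : i + 1 = l.length) {y : W}
    (hy : H.Adj l[i] y) : y ∈ l := by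
  have hrev := mem_of_adj_getElem_zero_of_length_maximal (l := l.reverse)
    (List.isChain_reverse.mpr (hc.imp fun _ _ h => h.symm)) (List.nodup_reverse.mpr hn)
    (fun l' hc' hn' => by
      simpa using hmax l'.reverse (List.isChain_reverse.mpr (hc'.imp fun _ _ h => h.symm))
        (List.nodup_reverse.mpr hn'))
    (by rw [List.length_reverse]; omega) (y := y) (by simpa [List.getElem_reverse, ← hi] using hy)
  exact List.mem_reverse.mp hrev

theorem AtMostTwoNeighbors.mem_of_length_maximal (hdeg : H.AtMostTwoNeighbors)
    (hconn : H.Preconnected) (hl : 0 < l.length) (w : W) : w ∈ l := by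
  by_contra hw
  obtain ⟨d, -, hx, hy⟩ :=
    (hconn l[0] w).some.exists_boundary_dart {x | x ∈ l} (List.getElem_mem hl) hw
  obtain ⟨i, hi, hxi⟩ := List.getElem_of_mem hx
  have hadj : H.Adj l[i] d.snd := hxi ▸ d.adj
  apply hy
  rcases i with _ | i
  · exact mem_of_adj_getElem_zero_of_length_maximal hc hn hmax hl hadj
  by_cases hlast : i + 2 < l.length
  · rcases hdeg.eq_getElem_or_eq_getElem_of_adj hc hn hlast hadj with h | h <;>
      exact h ▸ List.getElem_mem _
  · exact mem_of_adj_getElem_last_of_length_maximal hc hn hmax (by omega) hadj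

end LengthMaximal

theorem AtMostTwoNeighbors.isPathGraph_or_isCycleGraph [Finite W] (hdeg : H.AtMostTwoNeighbors)
    (hconn : H.Connected) : IsPathGraph H ∨ IsCycleGraph H := by
  obtain ⟨l, hc, hn, hmax⟩ := exists_isChain_nodup_length_maximal H
  obtain ⟨v⟩ := hconn.nonempty
  have hl : 0 < l.length := hmax [v] (List.isChain_singleton v) (List.nodup_singleton v)
  have hcov := hdeg.mem_of_length_maximal hc hn hmax hconn.preconnected hl
  by_cases hclose : ∃ (_ : 3 ≤ l.length), H.Adj l[0] l[l.length - 1]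
  · obtain ⟨hlen, hclose⟩ := hclose
    exact .inr <| isCycleGraph_of_isChain hc hn hcov hlen hclose fun i j hij hj =>
      hdeg.eq_ends_of_adj_getElem hc hn hj hij
  · refine .inl <| isPathGraph_of_isChain hc hn hcov fun i j hij hj hadj => hclose ?_
    obtain ⟨rfl, rfl⟩ := hdeg.eq_ends_of_adj_getElem hc hn hj hij hadj
    exact ⟨by omega, hadj⟩

end SimpleGraph

theorem Free.eq_or_eq_or_eq_of_claw {V : Type*} {G : SimpleGraph V} (hclaw : _root_.Free claw G)
    {v x y z : V} (hx : G.Adj v x) (hy : G.Adj v y) (hz : G.Adj v z)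
    (hxy : ¬ G.Adj x y) (hxz : ¬ G.Adj x z) (hyz : ¬ G.Adj y z) :
    x = y ∨ x = z ∨ y = z := by
  by_contra! hne
  obtain ⟨hxy', hxz', hyz'⟩ := hne
  let f : Fin 1 ⊕ Fin 3 → V := Sum.elim (fun _ => v) ![x, y, z]
  have hf : f.Injective := by
    rintro (a | a) (b | b) hab <;> fin_cases a <;> fin_cases b <;>
      simp_all [f, eq_comm, hx.ne, hy.ne, hz.ne]
  refine hclaw.false ⟨⟨f, hf⟩, fun {a b} => ?_⟩
  change G.Adj (f a) (f b) ↔ claw.Adj a b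
  rcases a with a | a <;> rcases b with b | b <;> fin_cases a <;> fin_cases b <;>
    simp_all [f, claw, G.adj_comm]

theorem SimpleGraph.Coloring.atMostTwoNeighbors_induce_two_colors {V α : Type*}
    {G : SimpleGraph V} (hclaw : _root_.Free claw G) (C : G.Coloring α) (a b : α) :
    (G.induce {v | C v = a ∨ C v = b}).AtMostTwoNeighbors := by
  rintro ⟨v, hv⟩ ⟨x, hx⟩ ⟨y, hy⟩ ⟨z, hz⟩ hvx hvy hvz
  simp only [induce_adj] at hvx hvy hvz
  have same_color {u w : V} (hu : G.Adj v u) (hw : G.Adj v w) (hua : C u = a ∨ C u = b)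
      (hwa : C w = a ∨ C w = b) : C u = C w := by
    have := C.valid hu
    have := C.valid hw
    grind
  have hxy := same_color hvx hvy hx hy
  have hxz := same_color hvx hvz hx hz
  simpa only [Subtype.mk.injEq] using hclaw.eq_or_eq_or_eq_of_claw hvx hvy hvz
    (fun h => C.valid h hxy) (fun h => C.valid h hxz) (fun h => C.valid h (hxy ▸ hxz))

theorem stmt_0 {V α : Type*} [Fintype V] (G : SimpleGraph V) (hclaw : _root_.Free claw G)
    (C : G.Coloring α) (a b : α) :
    ∀ c : (G.induce {v | C v = a ∨ C v = b}).ConnectedComponent,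
      IsPathGraph ((G.induce {v | C v = a ∨ C v = b}).induce c.supp) ∨
      IsCycleGraph ((G.induce {v | C v = a ∨ C v = b}).induce c.supp) := fun c =>
  ((C.atMostTwoNeighbors_induce_two_colors hclaw a b).induce c.supp).isPathGraph_or_isCycleGraph
    (ConnectedComponent.maximal_connected_induce_supp c).prop
end

section
/- Let G be a finite simple graph that is both K_{1,3}-free and ((K_2 ∪ K_1) + K_2)-free. Then for every vertex u, if Q is a maximum clique in the induced subgraph on N(u) and R = N(u) \ Q, then at least one of the following holds: (1) the induced subgraph on N(u) is a 5-cycle; (2) the induced subgraph on N(u) is a path on 4 vertices; (3) R induces a complete graph and every vertex of R is nonadjacent to exactly one vertex of Q, and distinct vertices of R are nonadjacent to distinct vertices of Q; (4) R induces a complete graph and there are no edges between R and Q. -/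
/-!
By claw-freeness `N(u)` has no independent triple, and by `(K₂ ∪ K₁) + K₂`-freeness every
neighbourhood inside `N(u)` is complete multipartite. If `R` is not a clique, or if some vertex
of `R` misses two (hence all) vertices of `Q` while another one sees `Q`, these force `|Q| = 2`;
then `N(u)` is triangle-free, contains an induced `P₄`, and is therefore `P₄` or `C₅`.
Otherwise every vertex of `R` misses exactly one vertex of `Q`, or none sees `Q`; two vertices
of `R` missing the same `q ∈ Q` would extend `Q - q` to a clique larger than `Q`.
-/

open SimpleGraph

open Finset

namespace SimpleGraph

variable {V : Type*} {G : SimpleGraph V}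

def IndepTripleFreeOn (G : SimpleGraph V) (S : Set V) : Prop :=
  ∀ ⦃a b c⦄, a ∈ S → b ∈ S → c ∈ S → a ≠ b → a ≠ c → b ≠ c →
    ¬G.Adj a b → ¬G.Adj a c → G.Adj b c

/-- No vertex of `S` has an induced `K₂ ∪ K₁` in its neighbourhood within `S`, i.e. these
neighbourhoods are complete multipartite. -/
def LocallyCompleteMultipartiteOn (G : SimpleGraph V) (S : Set V) : Prop :=
  ∀ ⦃e a b c⦄, e ∈ S → a ∈ S → b ∈ S → c ∈ S → G.Adj e a → G.Adj e b → G.Adj e c →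
    G.Adj a b → ¬G.Adj a c → G.Adj b c

lemma injective_of_adj_iff {W : Type*} {H : SimpleGraph W} {f : W → V}
    (hH : ∀ i j, i ≠ j → ∃ k, ¬(H.Adj i k ↔ H.Adj j k))
    (hf : ∀ i j, G.Adj (f i) (f j) ↔ H.Adj i j) : f.Injective := fun i j hij => by
  by_contra hne
  obtain ⟨k, hk⟩ := hH i j hne
  exact hk (by rw [← hf, ← hf, hij])

theorem _root_.Free.indepTripleFreeOn_neighborSet (h : _root_.Free claw G) (u : V) :
    G.IndepTripleFreeOn (G.neighborSet u) := by
  intro a b c (hua : G.Adj u a) (hub : G.Adj u b) (huc : G.Adj u c) hab hac hbc nab nac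
  by_contra nbc
  let f : Fin 1 ⊕ Fin 3 → V := Sum.elim (fun _ => u) ![a, b, c]
  have hf : ∀ i j, G.Adj (f i) (f j) ↔ claw.Adj i j := by
    rintro (i | i) (j | j) <;> fin_cases i <;> fin_cases j <;>
      simp [f, claw, hua, hub, huc, hua.symm, hub.symm, huc.symm, nab, nac, nbc,
        G.adj_comm b a, G.adj_comm c a, G.adj_comm c b]
  have hinj : f.Injective := by
    rintro (i | i) (j | j) <;> fin_cases i <;> fin_cases j <;>
      simp [f, hua.ne, hub.ne, huc.ne, hua.ne', hub.ne', huc.ne', hab, hac, hbc,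
        hab.symm, hac.symm, hbc.symm]
  exact h.false ⟨⟨f, hinj⟩, hf _ _⟩

theorem _root_.Free.locallyCompleteMultipartiteOn_neighborSet (h : _root_.Free kkJoin G)
    (u : V) : G.LocallyCompleteMultipartiteOn (G.neighborSet u) := by
  intro e a b c (hue : G.Adj u e) (hua : G.Adj u a) (hub : G.Adj u b) (huc : G.Adj u c)
    hea heb hec hab nac
  by_contra nbc
  have hf : ∀ i j, G.Adj (![a, b, c, u, e] i) (![a, b, c, u, e] j) ↔ kkJoin.Adj i j := by
    intro i j
    fin_cases i <;> fin_cases j <;>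
      simp [kkJoin, hab, hab.symm, hue, hue.symm, hua, hua.symm, hub, hub.symm, huc, huc.symm,
        hea, hea.symm, heb, heb.symm, hec, hec.symm, nac, nbc, G.adj_comm c a, G.adj_comm c b]
  have hkk : ∀ i j, i ≠ j → ∃ k, ¬(kkJoin.Adj i k ↔ kkJoin.Adj j k) := by
    simp only [kkJoin, fromEdgeSet_adj]
    decide
  exact h.false ⟨⟨_, injective_of_adj_iff hkk hf⟩, hf _ _⟩

lemma nonempty_induce_range_iso {W : Type*} {H : SimpleGraph W} (f : W → V)
    (hH : ∀ i j, i ≠ j → ∃ k, ¬(H.Adj i k ↔ H.Adj j k))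
    (hf : ∀ i j, G.Adj (f i) (f j) ↔ H.Adj i j) : Nonempty (G.induce (Set.range f) ≃g H) :=
  ⟨(Embedding.isoInduceRange ⟨⟨f, injective_of_adj_iff hH hf⟩, hf _ _⟩).symm⟩

lemma nonempty_induce_iso_pathGraph_four {S : Set V} {a b c d : V} (hS : S = {a, b, c, d})
    (hab : G.Adj a b) (hbc : G.Adj b c) (hcd : G.Adj c d)
    (hac : ¬G.Adj a c) (had : ¬G.Adj a d) (hbd : ¬G.Adj b d) :
    Nonempty (G.induce S ≃g pathGraph 4) := by
  obtain rfl : S = Set.range ![a, b, c, d] := by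
    ext x; simp [hS, eq_comm]; tauto
  refine nonempty_induce_range_iso _ (by simp only [pathGraph_adj]; decide) fun i j => ?_
  fin_cases i <;> fin_cases j <;>
    simp [pathGraph_adj, hab, hbc, hcd, hab.symm, hbc.symm, hcd.symm, hac, had, hbd,
      G.adj_comm c a, G.adj_comm d a, G.adj_comm d b]

lemma nonempty_induce_iso_cycleGraph_five {S : Set V} {a b c d e : V}
    (hS : S = {a, b, c, d, e}) (hab : G.Adj a b) (hbc : G.Adj b c) (hcd : G.Adj c d)
    (hde : G.Adj d e) (hea : G.Adj e a) (hac : ¬G.Adj a c) (had : ¬G.Adj a d)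
    (hbd : ¬G.Adj b d) (hbe : ¬G.Adj b e) (hce : ¬G.Adj c e) :
    Nonempty (G.induce S ≃g cycleGraph 5) := by
  obtain rfl : S = Set.range ![a, b, c, d, e] := by
    ext x; simp [hS, eq_comm]; tauto
  refine nonempty_induce_range_iso _ (by decide) fun i j => ?_
  fin_cases i <;> fin_cases j <;>
    simp [cycleGraph_adj, hab, hbc, hcd, hde, hea, hab.symm, hbc.symm, hcd.symm, hde.symm,
      hea.symm, hac, had, hbd, hbe, hce, G.adj_comm c a, G.adj_comm d a, G.adj_comm d b,
      G.adj_comm e b, G.adj_comm e c] <;> decide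

lemma IndepTripleFreeOn.adj_of_mem_of_path {S : Set V} (hα : G.IndepTripleFreeOn S)
    (htri : ∀ ⦃x y z⦄, x ∈ S → y ∈ S → z ∈ S → G.Adj x y → G.Adj x z → ¬G.Adj y z)
    {a b c d x : V} (ha : a ∈ S) (hb : b ∈ S) (hc : c ∈ S) (hd : d ∈ S)
    (hab : G.Adj a b) (hbc : G.Adj b c) (hcd : G.Adj c d)
    (hac : ¬G.Adj a c) (had : ¬G.Adj a d) (hbd : ¬G.Adj b d) (hx : x ∈ S)
    (hxa : x ≠ a) (hxb : x ≠ b) (hxc : x ≠ c) (hxd : x ≠ d) :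
    G.Adj x a ∧ ¬G.Adj x b ∧ ¬G.Adj x c ∧ G.Adj x d := by
  have hac' : a ≠ c := by rintro rfl; exact had hcd
  have hbd' : b ≠ d := by rintro rfl; exact had hab
  have nxb : ¬G.Adj x b := fun hxb' =>
    hac (hα hx ha hc hxa hxc hac' (fun h => htri hx hb ha hxb' h hab.symm)
      (fun h => htri hx hb hc hxb' h hbc))
  have nxc : ¬G.Adj x c := fun hxc' =>
    hbd (hα hx hb hd hxb hxd hbd' nxb (fun h => htri hx hc hd hxc' h hcd))
  exact ⟨by_contra fun h => hac (hα hx ha hc hxa hxc hac' h nxc), nxb, nxc,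
    by_contra fun h => hbd (hα hx hb hd hxb hxd hbd' nxb h)⟩

/-- Two vertices off the path are adjacent, as neither sees `b`, so with `a` they would form a
triangle; hence at most one such vertex exists. -/
lemma IndepTripleFreeOn.nonempty_iso_cycleGraph_or_pathGraph {S : Set V}
    (hα : G.IndepTripleFreeOn S)
    (htri : ∀ ⦃x y z⦄, x ∈ S → y ∈ S → z ∈ S → G.Adj x y → G.Adj x z → ¬G.Adj y z)
    {a b c d : V} (ha : a ∈ S) (hb : b ∈ S) (hc : c ∈ S) (hd : d ∈ S)
    (hab : G.Adj a b) (hbc : G.Adj b c) (hcd : G.Adj c d)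
    (hac : ¬G.Adj a c) (had : ¬G.Adj a d) (hbd : ¬G.Adj b d) :
    Nonempty (G.induce S ≃g cycleGraph 5) ∨ Nonempty (G.induce S ≃g pathGraph 4) := by
  have hext := fun {x} =>
    hα.adj_of_mem_of_path htri (x := x) ha hb hc hd hab hbc hcd hac had hbd
  by_cases hx : ∃ x ∈ S, x ≠ a ∧ x ≠ b ∧ x ≠ c ∧ x ≠ d
  · obtain ⟨x, hx, hxa, hxb, hxc, hxd⟩ := hx
    obtain ⟨hxa', nxb, nxc, hxd'⟩ := hext hx hxa hxb hxc hxd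
    have hS : S = {a, b, c, d, x} := by
      refine Set.ext fun y =>
        ⟨fun hy => ?_, by rintro (rfl | rfl | rfl | rfl | rfl) <;> assumption⟩
      by_contra! hne
      simp only [Set.mem_insert_iff, Set.mem_singleton_iff, not_or] at hne
      obtain ⟨hya, hyb, hyc, hyd, hyx⟩ := hne
      obtain ⟨hya', nyb, -, -⟩ := hext hy hya hyb hyc hyd
      have hxy : G.Adj x y := hα hb hx hy hxb.symm (Ne.symm hyb) (Ne.symm hyx)
        (fun h => nxb h.symm) (fun h => nyb h.symm)
      exact htri ha hx hy hxa'.symm hya'.symm hxy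
    exact Or.inl (nonempty_induce_iso_cycleGraph_five hS hab hbc hcd hxd'.symm hxa' hac had hbd
      (fun h => nxb h.symm) (fun h => nxc h.symm))
  · push Not at hx
    have hS : S = {a, b, c, d} := by
      refine Set.ext fun y => ⟨fun hy => ?_, by rintro (rfl | rfl | rfl | rfl) <;> assumption⟩
      simp only [Set.mem_insert_iff, Set.mem_singleton_iff]
      tauto
    exact Or.inr (nonempty_induce_iso_pathGraph_four hS hab hbc hcd hac had hbd)

lemma LocallyCompleteMultipartiteOn.not_adj_of_isClique {S K : Set V}
    (hkk : G.LocallyCompleteMultipartiteOn S) (hK : G.IsClique K) (hKS : K ⊆ S) {r q q' p : V}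
    (hr : r ∈ S) (hq : q ∈ K) (hq' : q' ∈ K) (hp : p ∈ K) (hqq' : q ≠ q')
    (hrq : ¬G.Adj r q) (hrq' : ¬G.Adj r q') : ¬G.Adj r p := fun hrp => by
  have hpq : p ≠ q := by rintro rfl; exact hrq hrp
  have hpq' : p ≠ q' := by rintro rfl; exact hrq' hrp
  exact hrq' (hkk (hKS hp) (hKS hq) (hKS hq') hr (hK hp hq hpq) (hK hp hq' hpq') hrp.symm
    (hK hq hq' hqq') (fun h => hrq h.symm)).symm

structure IsMaximumCliqueIn (G : SimpleGraph V) (S : Set V) (Q : Finset V) : Prop where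
  isClique : G.IsClique (Q : Set V)
  subset : (Q : Set V) ⊆ S
  card_le : ∀ Q' : Finset V, G.IsClique (Q' : Set V) → (Q' : Set V) ⊆ S → #Q' ≤ #Q

namespace IsMaximumCliqueIn

variable {S : Set V} {Q : Finset V}

lemma mem_of_mem (hQ : G.IsMaximumCliqueIn S Q) {p : V} (hp : p ∈ Q) : p ∈ S := hQ.subset hp

lemma adj_of_ne (hQ : G.IsMaximumCliqueIn S Q) {p p' : V} (hp : p ∈ Q) (hp' : p' ∈ Q)
    (hne : p ≠ p') : G.Adj p p' := hQ.isClique hp hp' hne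

lemma exists_not_adj (hQ : G.IsMaximumCliqueIn S Q) {r : V} (hr : r ∈ S) (hrQ : r ∉ Q) :
    ∃ q ∈ Q, ¬G.Adj r q := by
  classical
  by_contra! hadj
  have := hQ.card_le (insert r Q)
    (by push_cast; exact hQ.isClique.insert fun q hq _ => hadj q hq)
    (by push_cast; exact Set.insert_subset hr hQ.subset)
  rw [card_insert_of_notMem hrQ] at this
  omega

lemma not_adj_of_card_le_two (hQ : G.IsMaximumCliqueIn S Q) (hcard : #Q ≤ 2) {x y z : V}
    (hx : x ∈ S) (hy : y ∈ S) (hz : z ∈ S) (hxy : G.Adj x y) (hxz : G.Adj x z) :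
    ¬G.Adj y z := fun hyz => by
  classical
  have h3 := is3Clique_triple_iff.mpr ⟨hxy, hxz, hyz⟩
  have := hQ.card_le _ h3.isClique (by simp [Set.insert_subset_iff, hx, hy, hz])
  rw [h3.card_eq] at this
  omega

/-- Otherwise `r` and `r'` could replace `q` in `Q`. -/
lemma not_forall_adj_of_ne (hQ : G.IsMaximumCliqueIn S Q) {r r' q : V} (hr : r ∈ S)
    (hr' : r' ∈ S) (hrQ : r ∉ Q) (hr'Q : r' ∉ Q) (hrr' : G.Adj r r') (hq : q ∈ Q) :
    ¬∀ p ∈ Q, p ≠ q → G.Adj r p ∧ G.Adj r' p := fun h => by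
  classical
  have hclique : G.IsClique (insert r (insert r' (Q.erase q)) : Finset V) := by
    push_cast
    refine ((hQ.isClique.subset (by simp)).insert fun p hp _ => ?_).insert ?_
    · simp only [Set.mem_sdiff, mem_coe, Set.mem_singleton_iff] at hp
      exact (h p hp.1 hp.2).2
    · rintro p (rfl | hp) -
      · exact hrr'
      simp only [Set.mem_sdiff, mem_coe, Set.mem_singleton_iff] at hp
      exact (h p hp.1 hp.2).1
  have := hQ.card_le _ hclique (by
    push_cast
    exact Set.insert_subset hr (Set.insert_subset hr' (Set.sdiff_subset.trans hQ.subset)))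
  rw [card_insert_of_notMem (by simp [hrr'.ne, hrQ]), card_insert_of_notMem (by simp [hr'Q]),
    card_erase_of_mem hq] at this
  have := card_pos.2 ⟨q, hq⟩
  omega

lemma eq_of_not_adj_of_not_adj (hQ : G.IsMaximumCliqueIn S Q) (hR : G.IsClique (S \ Q))
    (huniq : ∀ r ∈ S \ Q, ∀ q ∈ Q, ∀ q' ∈ Q, ¬G.Adj r q → ¬G.Adj r q' → q = q')
    {r r' q : V} (hr : r ∈ S \ Q) (hr' : r' ∈ S \ Q) (hq : q ∈ Q)
    (hrq : ¬G.Adj r q) (hr'q : ¬G.Adj r' q) : r = r' := by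
  by_contra hrr'
  refine hQ.not_forall_adj_of_ne hr.1 hr'.1 hr.2 hr'.2 (hR hr hr' hrr') hq fun p hp hpq => ⟨?_, ?_⟩
  · exact by_contra fun h => hpq (huniq r hr p hp q hq h hrq)
  · exact by_contra fun h => hpq (huniq r' hr' p hp q hq h hr'q)

lemma nonempty_iso_cycleGraph_or_pathGraph_of_not_adj (hQ : G.IsMaximumCliqueIn S Q)
    (hα : G.IndepTripleFreeOn S) (hkk : G.LocallyCompleteMultipartiteOn S) {r₁ r₂ : V}
    (hr₁ : r₁ ∈ S) (hr₂ : r₂ ∈ S) (hr₁Q : r₁ ∉ Q) (hr₂Q : r₂ ∉ Q) (hne : r₁ ≠ r₂)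
    (hr₁₂ : ¬G.Adj r₁ r₂) :
    Nonempty (G.induce S ≃g cycleGraph 5) ∨ Nonempty (G.induce S ≃g pathGraph 4) := by
  classical
  obtain ⟨q₁, hq₁, nr₁q₁⟩ := hQ.exists_not_adj hr₁ hr₁Q
  obtain ⟨q₂, hq₂, nr₂q₂⟩ := hQ.exists_not_adj hr₂ hr₂Q
  have hq₁S := hQ.mem_of_mem hq₁
  have hq₂S := hQ.mem_of_mem hq₂
  have hr₂q₁ : G.Adj r₂ q₁ := hα hr₁ hr₂ hq₁S hne (ne_of_mem_of_not_mem hq₁ hr₁Q).symm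
    (ne_of_mem_of_not_mem hq₁ hr₂Q).symm hr₁₂ nr₁q₁
  have hr₁q₂ : G.Adj r₁ q₂ := hα hr₂ hr₁ hq₂S hne.symm (ne_of_mem_of_not_mem hq₂ hr₂Q).symm
    (ne_of_mem_of_not_mem hq₂ hr₁Q).symm (fun h => hr₁₂ h.symm) nr₂q₂
  have hq₁₂ : q₁ ≠ q₂ := by rintro rfl; exact nr₂q₂ hr₂q₁
  -- A third vertex `p` of `Q` would see `r₁` and `r₂`, and the edge `q₂ r₁` would then leave
  -- `r₂` isolated in the neighbourhood of `p`.
  have hQ₂ : ∀ p ∈ Q, p = q₁ ∨ p = q₂ := by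
    by_contra! h
    obtain ⟨p, hp, hpq₁, hpq₂⟩ := h
    have hpS := hQ.mem_of_mem hp
    have hr₁p : G.Adj r₁ p := by_contra fun h => nr₁q₁ (hkk hq₂S hpS hq₁S hr₁
      (hQ.adj_of_ne hq₂ hp hpq₂.symm) (hQ.adj_of_ne hq₂ hq₁ hq₁₂.symm) hr₁q₂.symm
      (hQ.adj_of_ne hp hq₁ hpq₁) (fun h' => h h'.symm)).symm
    have hr₂p : G.Adj r₂ p := by_contra fun h => nr₂q₂ (hkk hq₁S hpS hq₂S hr₂
      (hQ.adj_of_ne hq₁ hp hpq₁.symm) (hQ.adj_of_ne hq₁ hq₂ hq₁₂) hr₂q₁.symm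
      (hQ.adj_of_ne hp hq₂ hpq₂) (fun h' => h h'.symm)).symm
    exact hr₁₂ (hkk hpS hq₂S hr₁ hr₂ (hQ.adj_of_ne hp hq₂ hpq₂) hr₁p.symm hr₂p.symm
      hr₁q₂.symm (fun h => nr₂q₂ h.symm))
  have hcard : #Q ≤ 2 := (card_le_card fun p hp => by simpa using hQ₂ p hp).trans card_le_two
  exact hα.nonempty_iso_cycleGraph_or_pathGraph (fun _ _ _ => hQ.not_adj_of_card_le_two hcard)
    hr₁ hq₂S hq₁S hr₂ hr₁q₂ (hQ.adj_of_ne hq₂ hq₁ hq₁₂.symm) hr₂q₁.symm nr₁q₁ hr₁₂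
    (fun h => nr₂q₂ h.symm)

lemma nonempty_iso_cycleGraph_or_pathGraph_of_adj (hQ : G.IsMaximumCliqueIn S Q)
    (hα : G.IndepTripleFreeOn S) (hkk : G.LocallyCompleteMultipartiteOn S) {r₀ r₁ q₀ : V}
    (hr₀ : r₀ ∈ S) (hr₁ : r₁ ∈ S) (hr₁Q : r₁ ∉ Q) (hq₀ : q₀ ∈ Q)
    (hr₀Q : ∀ p ∈ Q, ¬G.Adj r₀ p) (hr₁q₀ : G.Adj r₁ q₀) (hr₁₀ : G.Adj r₁ r₀) :
    Nonempty (G.induce S ≃g cycleGraph 5) ∨ Nonempty (G.induce S ≃g pathGraph 4) := by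
  classical
  have hq₀S := hQ.mem_of_mem hq₀
  have nr₁p : ∀ p ∈ Q, p ≠ q₀ → ¬G.Adj r₁ p := fun p hp hpq₀ hr₁p =>
    hr₀Q p hp (hkk hr₁ hq₀S (hQ.mem_of_mem hp) hr₀ hr₁q₀ hr₁p hr₁₀
      (hQ.adj_of_ne hq₀ hp hpq₀.symm) (fun h => hr₀Q q₀ hq₀ h.symm)).symm
  obtain ⟨q₂, hq₂, nr₁q₂⟩ := hQ.exists_not_adj hr₁ hr₁Q
  have hq₂S := hQ.mem_of_mem hq₂
  have hq₂₀ : q₂ ≠ q₀ := by rintro rfl; exact nr₁q₂ hr₁q₀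
  have hQ₂ : ∀ p ∈ Q, p = q₀ ∨ p = q₂ := by
    by_contra! h
    obtain ⟨p, hp, hpq₀, hpq₂⟩ := h
    exact nr₁p p hp hpq₀ (hkk hq₀S hq₂S (hQ.mem_of_mem hp) hr₁ (hQ.adj_of_ne hq₀ hq₂ hq₂₀.symm)
      (hQ.adj_of_ne hq₀ hp hpq₀.symm) hr₁q₀.symm (hQ.adj_of_ne hq₂ hp hpq₂.symm)
      (fun h => nr₁q₂ h.symm)).symm
  have hcard : #Q ≤ 2 := (card_le_card fun p hp => by simpa using hQ₂ p hp).trans card_le_two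
  exact hα.nonempty_iso_cycleGraph_or_pathGraph (fun _ _ _ => hQ.not_adj_of_card_le_two hcard)
    hq₂S hq₀S hr₁ hr₀ (hQ.adj_of_ne hq₂ hq₀ hq₂₀) hr₁q₀.symm hr₁₀ (fun h => nr₁q₂ h.symm)
    (fun h => hr₀Q q₂ hq₂ h.symm) (fun h => hr₀Q q₀ hq₀ h.symm)

theorem cycle_or_path_or_isClique_sdiff (hQ : G.IsMaximumCliqueIn S Q)
    (hα : G.IndepTripleFreeOn S) (hkk : G.LocallyCompleteMultipartiteOn S) :
    Nonempty (G.induce S ≃g cycleGraph 5) ∨ Nonempty (G.induce S ≃g pathGraph 4) ∨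
    (G.IsClique (S \ Q) ∧ (∀ r ∈ S \ Q, ∃! q, q ∈ Q ∧ ¬G.Adj r q) ∧
      (∀ r ∈ S \ Q, ∀ r' ∈ S \ Q, ∀ q ∈ Q, r ≠ r' → ¬G.Adj r q → ¬G.Adj r' q → False)) ∨
    (G.IsClique (S \ Q) ∧ ∀ r ∈ S \ Q, ∀ q ∈ Q, ¬G.Adj r q) := by
  by_cases hR : G.IsClique (S \ Q)
  swap
  · rw [isClique_iff, Set.Pairwise] at hR
    push Not at hR
    obtain ⟨r₁, ⟨hr₁, hr₁Q⟩, r₂, ⟨hr₂, hr₂Q⟩, hne, hr₁₂⟩ := hR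
    exact (hQ.nonempty_iso_cycleGraph_or_pathGraph_of_not_adj hα hkk hr₁ hr₂ hr₁Q hr₂Q hne
      hr₁₂).imp_right Or.inl
  by_cases hnone : ∀ r ∈ S \ Q, ∀ q ∈ Q, ¬G.Adj r q
  · exact Or.inr (Or.inr (Or.inr ⟨hR, hnone⟩))
  by_cases huniq : ∀ r ∈ S \ Q, ∀ q ∈ Q, ∀ q' ∈ Q, ¬G.Adj r q → ¬G.Adj r q' → q = q'
  · refine Or.inr (Or.inr (Or.inl ⟨hR, fun r hr => ?_, fun r hr r' hr' q hq hrr' hrq hr'q =>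
      hrr' (hQ.eq_of_not_adj_of_not_adj hR huniq hr hr' hq hrq hr'q)⟩))
    obtain ⟨q, hq, hrq⟩ := hQ.exists_not_adj hr.1 hr.2
    exact ⟨q, ⟨hq, hrq⟩, fun q' ⟨hq', hrq'⟩ => huniq r hr q' hq' q hq hrq' hrq⟩
  push Not at hnone huniq
  obtain ⟨r₁, ⟨hr₁, hr₁Q⟩, q₀, hq₀, hr₁q₀⟩ := hnone
  obtain ⟨r₀, ⟨hr₀, hr₀Q⟩, q, hq, q', hq', hr₀q, hr₀q', hqq'⟩ := huniq
  have hr₀Q' : ∀ p ∈ Q, ¬G.Adj r₀ p := fun p hp =>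
    hkk.not_adj_of_isClique hQ.isClique hQ.subset hr₀ hq hq' hp hqq' hr₀q hr₀q'
  have hr₁₀ : G.Adj r₁ r₀ := hR ⟨hr₁, hr₁Q⟩ ⟨hr₀, hr₀Q⟩ (by rintro rfl; exact hr₀Q' q₀ hq₀ hr₁q₀)
  exact (hQ.nonempty_iso_cycleGraph_or_pathGraph_of_adj hα hkk hr₀ hr₁ hr₁Q hq₀ hr₀Q' hr₁q₀
    hr₁₀).imp_right Or.inl

end IsMaximumCliqueIn

end SimpleGraph

theorem stmt_1_general {V : Type*} (G : SimpleGraph V)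
    (hclaw : _root_.Free claw G) (hkk : _root_.Free kkJoin G) (u : V)
    (Q : Finset V) (hQclique : G.IsClique ↑Q) (hQsub : ↑Q ⊆ G.neighborSet u)
    (hQmax : ∀ Q' : Finset V, G.IsClique ↑Q' → ↑Q' ⊆ G.neighborSet u → Q'.card ≤ Q.card)
    (R : Set V) (hR : R = G.neighborSet u \ ↑Q) :
    Nonempty (G.induce (G.neighborSet u) ≃g cycleGraph 5) ∨
    Nonempty (G.induce (G.neighborSet u) ≃g pathGraph 4) ∨
    (G.IsClique R ∧ (∀ r ∈ R, ∃! q, q ∈ Q ∧ ¬ G.Adj r q) ∧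
      (∀ r ∈ R, ∀ r' ∈ R, ∀ q ∈ Q, r ≠ r' → ¬ G.Adj r q → ¬ G.Adj r' q → False)) ∨
    (G.IsClique R ∧ ∀ r ∈ R, ∀ q ∈ Q, ¬ G.Adj r q) := by
  subst hR
  exact IsMaximumCliqueIn.cycle_or_path_or_isClique_sdiff ⟨hQclique, hQsub, hQmax⟩
    (hclaw.indepTripleFreeOn_neighborSet u) (hkk.locallyCompleteMultipartiteOn_neighborSet u)

theorem stmt_1 {V : Type*} [Fintype V] (G : SimpleGraph V)
    (hclaw : _root_.Free claw G) (hkk : _root_.Free kkJoin G) (u : V)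
    (Q : Finset V) (hQclique : G.IsClique ↑Q) (hQsub : ↑Q ⊆ G.neighborSet u)
    (hQmax : ∀ Q' : Finset V, G.IsClique ↑Q' → ↑Q' ⊆ G.neighborSet u → Q'.card ≤ Q.card)
    (R : Set V) (hR : R = G.neighborSet u \ ↑Q) :
    Nonempty (G.induce (G.neighborSet u) ≃g cycleGraph 5) ∨
    Nonempty (G.induce (G.neighborSet u) ≃g pathGraph 4) ∨
    (G.IsClique R ∧ (∀ r ∈ R, ∃! q, q ∈ Q ∧ ¬ G.Adj r q) ∧
      (∀ r ∈ R, ∀ r' ∈ R, ∀ q ∈ Q, r ≠ r' → ¬ G.Adj r q → ¬ G.Adj r' q → False)) ∨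
    (G.IsClique R ∧ ∀ r ∈ R, ∀ q ∈ Q, ¬ G.Adj r q) :=
  stmt_1_general G hclaw hkk u Q hQclique hQsub hQmax R hR
end

section
/- If G is a finite simple graph that is K_{1,3}-free and ((K_2 ∪ K_1) + K_2)-free, then Δ(G) ≤ 2ω(G) − 1; moreover either Δ(G) = 2ω(G) − 1 with Δ(G) = 5 and ω(G) = 3, or Δ(G) ≤ 2ω(G) − 2. -/
open SimpleGraph

/-!
Fix a vertex `v`. For a neighbour `u` of `v`, let `A u` be the set of neighbours of `v` other
than `u` and not adjacent to `u`; then `deg v = |N(v) ∩ N(u)| + |A u| + 1`. Claw-freeness at `v`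
makes `A u ∪ {v}` a clique, so `|A u| ≤ ω - 1`. In the common neighbourhood of an edge, every
vertex misses at most one other vertex (otherwise there is a claw or an induced
`(K_2 ∪ K_1) + K_2`), so it contains a clique of half its size; adding the edge gives
`|N(v) ∩ N(u)| ≤ 2ω - 4`. Hence `deg v ≤ 2ω - 2` as soon as some `|A u| ≤ 1`. If some `|A u| ≥ 3`,
take `u` with `|A u|` maximal: a counting argument shows `|N(v) ∩ N(u)| < |A u|`, and again
`deg v ≤ 2ω - 2`. Otherwise every `|A u| = 2`, which forces `ω ≥ 3` and `deg v ≤ 5`.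
-/

section Local

variable {V : Type*} {G : SimpleGraph V}

theorem not_free_of_adj_iff {W : Type*} {H : SimpleGraph W} {f : W → V}
    (hf : Function.Injective f) (hadj : ∀ i j, G.Adj (f i) (f j) ↔ H.Adj i j) :
    ¬_root_.Free H G :=
  fun h => h.false ⟨⟨f, hf⟩, hadj _ _⟩

theorem adj_or_adj_or_adj_of_free_claw (hclaw : _root_.Free claw G) {v a b c : V}
    (ha : G.Adj v a) (hb : G.Adj v b) (hc : G.Adj v c)
    (hab : a ≠ b) (hac : a ≠ c) (hbc : b ≠ c) :
    G.Adj a b ∨ G.Adj a c ∨ G.Adj b c := by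
  by_contra! ⟨nab, nac, nbc⟩
  refine not_free_of_adj_iff (f := Sum.elim (fun _ => v) ![a, b, c]) ?_ ?_ hclaw
  · simp [Function.Injective, Sum.forall, Fin.forall_fin_succ, ha.ne, hb.ne, hc.ne,
      ha.ne', hb.ne', hc.ne', hab, hac, hbc, hab.symm, hac.symm, hbc.symm]
  · simp [Fin.forall_fin_succ, claw, ha, hb, hc, ha.symm, hb.symm, hc.symm, nab, nac, nbc,
      G.adj_comm b a, G.adj_comm c]

theorem adj_of_free_kkJoin (hkk : _root_.Free kkJoin G) {s t a b c : V} (hst : G.Adj s t)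
    (ha : a ∈ G.commonNeighbors s t) (hb : b ∈ G.commonNeighbors s t)
    (hc : c ∈ G.commonNeighbors s t) (hab : G.Adj a b) (hac : a ≠ c) (hbc : b ≠ c)
    (nac : ¬G.Adj a c) : G.Adj b c := by
  by_contra nbc
  rw [mem_commonNeighbors] at ha hb hc
  refine not_free_of_adj_iff (f := ![a, b, c, s, t]) ?_ ?_ hkk
  · simp only [Matrix.vecCons, Fin.cons_injective_iff]
    simp [Function.injective_of_subsingleton, ha.1.ne', hb.1.ne', hc.1.ne', ha.2.ne',
      hb.2.ne', hc.2.ne', hab.ne, hac, hbc, hst.ne]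
  · simp [Fin.forall_fin_succ, kkJoin, ha, hb, hc, hst, hab, ha.1.symm, ha.2.symm, hb.1.symm,
      hb.2.symm, hc.1.symm, hc.2.symm, hst.symm, hab.symm, nac, nbc, G.adj_comm c]

theorem eq_of_not_adj_of_mem_commonNeighbors (hclaw : _root_.Free claw G)
    (hkk : _root_.Free kkJoin G) {s t a b c : V} (hst : G.Adj s t)
    (ha : a ∈ G.commonNeighbors s t) (hb : b ∈ G.commonNeighbors s t)
    (hc : c ∈ G.commonNeighbors s t) (hac : a ≠ c) (hbc : b ≠ c)
    (nac : ¬G.Adj a c) (nbc : ¬G.Adj b c) : a = b := by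
  by_contra hab
  by_cases h : G.Adj a b
  · exact nbc (adj_of_free_kkJoin hkk hst ha hb hc h hac hbc nac)
  · have := adj_or_adj_or_adj_of_free_claw hclaw (G.mem_commonNeighbors.1 ha).1
      (G.mem_commonNeighbors.1 hb).1 (G.mem_commonNeighbors.1 hc).1 hab hac hbc
    tauto

end Local

open Finset

section HalfClique

variable {V : Type*} [DecidableEq V] {G : SimpleGraph V} [DecidableRel G.Adj]

theorem exists_isClique_subset_card_le_two_mul (C : Finset V)
    (hC : ∀ a ∈ C, ∀ b ∈ C, ∀ c ∈ C, a ≠ c → b ≠ c → ¬G.Adj a c → ¬G.Adj b c → a = b) :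
    ∃ K ⊆ C, G.IsClique (K : Set V) ∧ #C ≤ 2 * #K := by
  induction C using Finset.strongInduction with
  | H C ih =>
  obtain rfl | ⟨x, hx⟩ := C.eq_empty_or_nonempty
  · exact ⟨∅, by simp⟩
  set D := C.filter (G.Adj x)
  set E := C.filter fun w => w ≠ x ∧ ¬G.Adj w x
  have hDC : D ⊂ C := filter_ssubset.2 ⟨x, hx, G.irrefl⟩
  have hE : #E ≤ 1 := card_le_one.2 fun a ha b hb => by
    simp only [E, mem_filter] at ha hb
    exact hC a ha.1 b hb.1 x hx ha.2.1 hb.2.1 ha.2.2 hb.2.2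
  have hcover : C ⊆ insert x (D ∪ E) := fun w hw => by
    by_cases hwx : w = x
    · simp [hwx]
    · by_cases hxw : G.Adj x w <;> simp [D, E, hw, hwx, hxw, G.adj_comm w x]
  obtain ⟨K, hKD, hK, hDK⟩ := ih D hDC (fun a ha b hb c hc =>
    hC a (hDC.1 ha) b (hDC.1 hb) c (hDC.1 hc))
  have hxK : x ∉ K := fun h => G.irrefl (mem_filter.1 (hKD h)).2
  refine ⟨insert x K, insert_subset hx (hKD.trans hDC.1), ?_, ?_⟩
  · rw [coe_insert, isClique_insert]
    exact ⟨hK, fun b hb _ => (mem_filter.1 (hKD hb)).2⟩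
  · calc #C ≤ #(insert x (D ∪ E)) := card_le_card hcover
      _ ≤ #D + #E + 1 := (card_insert_le _ _).trans (by grw [card_union_le])
      _ ≤ 2 * #(insert x K) := by rw [card_insert_of_notMem hxK]; omega

end HalfClique

section Neighborhood

variable {V : Type*} [Fintype V] [DecidableEq V] {G : SimpleGraph V} [DecidableRel G.Adj]

theorem mem_neighborFinset_sdiff_insert {v u w : V} :
    w ∈ G.neighborFinset v \ insert u (G.neighborFinset u) ↔
      G.Adj v w ∧ w ≠ u ∧ ¬G.Adj u w := by
  simp

theorem card_inter_add_card_sdiff_neighborFinset {v u : V} (hvu : G.Adj v u) :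
    #(G.neighborFinset v ∩ G.neighborFinset u) +
      #(G.neighborFinset v \ insert u (G.neighborFinset u)) + 1 = G.degree v := by
  rw [← card_neighborFinset_eq_degree,
    ← card_sdiff_add_card_inter (G.neighborFinset v) (insert u (G.neighborFinset u)),
    inter_insert_of_mem ((G.mem_neighborFinset v u).2 hvu), card_insert_of_notMem (by simp)]
  omega

theorem card_inter_neighborFinset_add_four_le (hclaw : _root_.Free claw G)
    (hkk : _root_.Free kkJoin G) {s t : V} (hst : G.Adj s t) :
    #(G.neighborFinset s ∩ G.neighborFinset t) + 4 ≤ 2 * G.cliqueNum := by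
  have hmem : ∀ {w}, w ∈ G.neighborFinset s ∩ G.neighborFinset t ↔
      w ∈ G.commonNeighbors s t := by
    simp [mem_commonNeighbors]
  obtain ⟨K, hKC, hK, hCK⟩ := exists_isClique_subset_card_le_two_mul _ fun a ha b hb c hc => by
    rw [hmem] at ha hb hc
    exact eq_of_not_adj_of_mem_commonNeighbors hclaw hkk hst ha hb hc
  have hKst : ∀ w ∈ K, G.Adj s w ∧ G.Adj t w := fun w hw => by simpa using hKC hw
  have hclique : G.IsClique (insert s (insert t K) : Finset V) := by
    rw [coe_insert, coe_insert]
    refine (hK.insert fun w hw _ => (hKst w hw).2).insert ?_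
    rintro w (rfl | hw) _
    exacts [hst, (hKst w hw).1]
  have hs : s ∉ insert t K := by simpa [hst.ne] using fun h => G.irrefl (hKst s h).1
  have ht : t ∉ K := fun h => G.irrefl (hKst t h).2
  have := IsClique.card_le_cliqueNum (tc := hclique)
  rw [card_insert_of_notMem hs, card_insert_of_notMem ht] at this
  omega

theorem isClique_neighborFinset_sdiff (hclaw : _root_.Free claw G) {v u : V}
    (hvu : G.Adj v u) :
    G.IsClique ((G.neighborFinset v \ insert u (G.neighborFinset u) : Finset V) : Set V) := by
  intro a ha b hb hab
  simp only [mem_coe, mem_sdiff, mem_insert, mem_neighborFinset, not_or] at ha hb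
  obtain h | h | h := adj_or_adj_or_adj_of_free_claw hclaw ha.1 hb.1 hvu hab ha.2.1 hb.2.1
  · exact h
  · exact absurd h.symm ha.2.2
  · exact absurd h.symm hb.2.2

theorem card_neighborFinset_sdiff_add_one_le (hclaw : _root_.Free claw G) {v u : V}
    (hvu : G.Adj v u) :
    #(G.neighborFinset v \ insert u (G.neighborFinset u)) + 1 ≤ G.cliqueNum := by
  have hclique : G.IsClique (insert v (G.neighborFinset v \ insert u (G.neighborFinset u)) :
      Finset V) := by
    rw [coe_insert]
    exact (isClique_neighborFinset_sdiff hclaw hvu).insert fun w hw _ => by simp_all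
  have hv : v ∉ G.neighborFinset v \ insert u (G.neighborFinset u) := by simp
  have := IsClique.card_le_cliqueNum (tc := hclique)
  rwa [card_insert_of_notMem hv] at this

theorem card_inter_neighborFinset_lt_card_sdiff (hclaw : _root_.Free claw G)
    (hkk : _root_.Free kkJoin G) {v x : V} (hvx : G.Adj v x)
    (h3 : 3 ≤ #(G.neighborFinset v \ insert x (G.neighborFinset x)))
    (hmax : ∀ u ∈ G.neighborFinset v, #(G.neighborFinset v \ insert u (G.neighborFinset u)) ≤
      #(G.neighborFinset v \ insert x (G.neighborFinset x))) :
    #(G.neighborFinset v ∩ G.neighborFinset x) <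
      #(G.neighborFinset v \ insert x (G.neighborFinset x)) := by
  set A := G.neighborFinset v \ insert x (G.neighborFinset x)
  set B := G.neighborFinset v ∩ G.neighborFinset x
  by_contra! hAB
  obtain ⟨a, ha⟩ : A.Nonempty := card_pos.1 (by omega)
  obtain ⟨hva, hax, hxa⟩ := mem_neighborFinset_sdiff_insert.1 ha
  have hsub : B.filter (¬G.Adj a ·) ⊆
      (G.neighborFinset v \ insert a (G.neighborFinset a)).erase x := fun y hy => by
    simp only [B, mem_filter, mem_inter, mem_neighborFinset] at hy
    simp only [mem_erase, mem_neighborFinset_sdiff_insert]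
    exact ⟨hy.1.2.ne', hy.1.1, fun h => hxa (h ▸ hy.1.2), hy.2⟩
  obtain ⟨y, hyB, hay⟩ : ∃ y ∈ B, G.Adj a y := by
    by_contra! h
    have hle := card_le_card hsub
    rw [filter_true_of_mem h, card_erase_of_mem
      (mem_neighborFinset_sdiff_insert.2 ⟨hvx, hax.symm, fun h => hxa h.symm⟩)] at hle
    have := hmax a ((G.mem_neighborFinset v a).2 hva)
    omega
  obtain ⟨hvy, hxy⟩ : G.Adj v y ∧ G.Adj x y := by simpa [B] using hyB
  obtain ⟨a1, ha1, a2, ha2, ha12⟩ := one_lt_card.1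
    (show 1 < #(A.erase a) by rw [card_erase_of_mem ha]; omega)
  -- `y` sees `a`, hence no other vertex of the clique `A`
  have hya : ∀ {a'}, a' ∈ A → a' ≠ a → ¬G.Adj y a' := fun ha' hne hya' => by
    rw [mem_neighborFinset_sdiff_insert] at ha'
    exact hne <| eq_of_not_adj_of_mem_commonNeighbors hclaw hkk hvy
      (G.mem_commonNeighbors.2 ⟨ha'.1, hya'⟩) (G.mem_commonNeighbors.2 ⟨hva, hay.symm⟩)
      (G.mem_commonNeighbors.2 ⟨hvx, hxy.symm⟩) ha'.2.1 hax (fun h => ha'.2.2 h.symm)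
      (fun h => hxa h.symm)
  have hAclique := isClique_neighborFinset_sdiff hclaw hvx
  have hmem : ∀ {a'}, a' ∈ A → a' ≠ a → a' ∈ G.commonNeighbors v a := fun ha' hne =>
    G.mem_commonNeighbors.2 ⟨(mem_neighborFinset_sdiff_insert.1 ha').1, hAclique ha ha' hne.symm⟩
  rw [mem_erase] at ha1 ha2
  exact ha12 <| eq_of_not_adj_of_mem_commonNeighbors hclaw hkk hva (hmem ha1.2 ha1.1)
    (hmem ha2.2 ha2.1) (G.mem_commonNeighbors.2 ⟨hvy, hay⟩)
    (fun h => (mem_neighborFinset_sdiff_insert.1 ha1.2).2.2 (h ▸ hxy))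
    (fun h => (mem_neighborFinset_sdiff_insert.1 ha2.2).2.2 (h ▸ hxy))
    (fun h => hya ha1.2 ha1.1 h.symm) (fun h => hya ha2.2 ha2.1 h.symm)

theorem card_neighborFinset_sdiff_le_one (hclaw : _root_.Free claw G)
    (hkk : _root_.Free kkJoin G) {v u w : V} (hvu : G.Adj v u) (hvw : G.Adj v w)
    (huw : G.Adj u w)
    (hsub : ∀ z ∈ G.neighborFinset v \ insert w (G.neighborFinset w), G.Adj u z) :
    #(G.neighborFinset v \ insert w (G.neighborFinset w)) ≤ 1 := by
  refine card_le_one.2 fun a ha b hb => ?_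
  have hmem : ∀ z ∈ G.neighborFinset v \ insert w (G.neighborFinset w),
      z ∈ G.commonNeighbors v u := fun z hz =>
    G.mem_commonNeighbors.2 ⟨(mem_neighborFinset_sdiff_insert.1 hz).1, hsub z hz⟩
  obtain ⟨-, haw, hwa⟩ := mem_neighborFinset_sdiff_insert.1 ha
  obtain ⟨-, hbw, hwb⟩ := mem_neighborFinset_sdiff_insert.1 hb
  exact eq_of_not_adj_of_mem_commonNeighbors hclaw hkk hvu (hmem a ha) (hmem b hb)
    (G.mem_commonNeighbors.2 ⟨hvw, huw⟩) haw hbw (fun h => hwa h.symm) (fun h => hwb h.symm)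

theorem degree_le_five_of_forall_card_eq_two (hclaw : _root_.Free claw G)
    (hkk : _root_.Free kkJoin G) {v u : V} (hvu : G.Adj v u)
    (h2 : ∀ w ∈ G.neighborFinset v, #(G.neighborFinset v \ insert w (G.neighborFinset w)) = 2) :
    G.degree v ≤ 5 := by
  obtain ⟨w1, w2, hw12, hu⟩ := card_eq_two.1 (h2 u ((G.mem_neighborFinset v u).2 hvu))
  have huz : ∀ {z}, G.Adj v z → z ≠ u → z ≠ w1 → z ≠ w2 → G.Adj u z := fun hvz hzu h1 h2 => by
    by_contra h
    have := mem_neighborFinset_sdiff_insert.2 ⟨hvz, hzu, h⟩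
    simp [hu, h1, h2] at this
  have hw1 : w1 ∈ G.neighborFinset v \ insert u (G.neighborFinset u) := by simp [hu]
  have hw2 : w2 ∈ G.neighborFinset v \ insert u (G.neighborFinset u) := by simp [hu]
  obtain ⟨hvw1, hw1u, huw1⟩ := mem_neighborFinset_sdiff_insert.1 hw1
  obtain ⟨hvw2, hw2u, huw2⟩ := mem_neighborFinset_sdiff_insert.1 hw2
  set A1 := G.neighborFinset v \ insert w1 (G.neighborFinset w1)
  set A2 := G.neighborFinset v \ insert w2 (G.neighborFinset w2)
  -- a neighbour `w` of `v` outside this set sees `u`, `w1` and `w2`, so its two non-neighbours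
  -- lie in the common neighbourhood of `v` and `u`, where `w` may miss only one vertex
  have hcover : G.neighborFinset v ⊆ insert w1 (insert w2 (A1 ∪ A2)) := by
    intro w hvw
    rw [mem_neighborFinset] at hvw
    by_contra hcon
    simp only [A1, A2, mem_insert, mem_union, mem_neighborFinset_sdiff_insert, not_or,
      not_and, not_not] at hcon
    obtain ⟨hww1, hww2, hw1w, hw2w⟩ := hcon
    replace hw1w := hw1w hvw hww1
    replace hw2w := hw2w hvw hww2
    have hwu : w ≠ u := by rintro rfl; exact huw1 hw1w.symm
    have huw := huz hvw hwu hww1 hww2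
    have := card_neighborFinset_sdiff_le_one hclaw hkk hvu hvw huw fun z hz => by
      obtain ⟨hvz, hzw, hwz⟩ := mem_neighborFinset_sdiff_insert.1 hz
      refine huz hvz ?_ ?_ ?_ <;> rintro rfl
      exacts [hwz huw.symm, hwz hw1w.symm, hwz hw2w.symm]
    have := h2 w ((G.mem_neighborFinset v w).2 hvw)
    omega
  have hu12 : u ∈ A1 ∩ A2 := by
    simp only [A1, A2, mem_inter, mem_neighborFinset_sdiff_insert]
    exact ⟨⟨hvu, hw1u.symm, fun h => huw1 h.symm⟩, ⟨hvu, hw2u.symm, fun h => huw2 h.symm⟩⟩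
  have h12 := card_union_add_card_inter A1 A2
  have hA1 : #A1 = 2 := h2 w1 ((G.mem_neighborFinset v w1).2 hvw1)
  have hA2 : #A2 = 2 := h2 w2 ((G.mem_neighborFinset v w2).2 hvw2)
  have := card_pos.2 ⟨u, hu12⟩
  calc G.degree v = #(G.neighborFinset v) := (card_neighborFinset_eq_degree G v).symm
    _ ≤ #(insert w1 (insert w2 (A1 ∪ A2))) := card_le_card hcover
    _ ≤ #(A1 ∪ A2) + 2 := (card_insert_le _ _).trans (by grw [card_insert_le])
    _ ≤ 5 := by omega

theorem degree_le_two_mul_cliqueNum_sub_two_or (hclaw : _root_.Free claw G)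
    (hkk : _root_.Free kkJoin G) (v : V) :
    G.degree v ≤ 2 * G.cliqueNum - 2 ∨ (G.degree v = 5 ∧ G.cliqueNum = 3) := by
  obtain hN | hN := (G.neighborFinset v).eq_empty_or_nonempty
  · simp [← card_neighborFinset_eq_degree, hN]
  obtain ⟨x, hx, hmax⟩ := (G.neighborFinset v).exists_max_image
    (fun u => #(G.neighborFinset v \ insert u (G.neighborFinset u))) hN
  rw [mem_neighborFinset] at hx
  have hdeg := card_inter_add_card_sdiff_neighborFinset hx
  have hB := card_inter_neighborFinset_add_four_le hclaw hkk hx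
  have hA := card_neighborFinset_sdiff_add_one_le hclaw hx
  by_cases h3 : 3 ≤ #(G.neighborFinset v \ insert x (G.neighborFinset x))
  · have := card_inter_neighborFinset_lt_card_sdiff hclaw hkk hx h3 hmax
    omega
  by_cases h1 : ∃ u ∈ G.neighborFinset v,
      #(G.neighborFinset v \ insert u (G.neighborFinset u)) ≤ 1
  · obtain ⟨u, hu, h1⟩ := h1
    rw [mem_neighborFinset] at hu
    have := card_inter_add_card_sdiff_neighborFinset hu
    have := card_inter_neighborFinset_add_four_le hclaw hkk hu
    omega
  push Not at h1
  have := degree_le_five_of_forall_card_eq_two hclaw hkk hx fun u hu => by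
    have := hmax u hu
    have := h1 u hu
    omega
  omega

end Neighborhood

theorem stmt_2 {V : Type*} [Fintype V] (G : SimpleGraph V)
    (hclaw : _root_.Free claw G) (hkk : _root_.Free kkJoin G) :
    maxDeg G ≤ 2 * G.cliqueNum - 1 ∧
      ((maxDeg G + 1 = 2 * G.cliqueNum ∧ maxDeg G = 5 ∧ G.cliqueNum = 3) ∨
        maxDeg G ≤ 2 * G.cliqueNum - 2) := by
  classical
  have hΔ : maxDeg G = G.maxDegree := by unfold maxDeg; congr
  have hdeg := degree_le_two_mul_cliqueNum_sub_two_or hclaw hkk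
  rw [hΔ]
  by_cases hω : G.cliqueNum = 3
  · have := G.maxDegree_le_of_forall_degree_le 5 fun v => by have := hdeg v; omega
    omega
  · have := G.maxDegree_le_of_forall_degree_le _ fun v => (hdeg v).resolve_right (hω ·.2)
    omega
end

section
/- Let G be a finite simple K_{1,3}-free graph, u a vertex, Q a maximum clique of the induced subgraph on N(u), and R = N(u) \ Q. If x, y ∈ R are nonadjacent, z, w ∈ Q with xz ∉ E(G) and yw ∉ E(G), then z ≠ w, xw ∈ E(G), and yz ∈ E(G). -/
open SimpleGraph

/-! If `yz` or `xw` were missing, `u` together with `x`, `y` and that vertex of `Q` would induce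
a claw; `z ≠ w` then follows since `y` is adjacent to `z` but not to `w`. -/

theorem Free.adj_of_claw {V : Type*} {G : SimpleGraph V} (hG : _root_.Free claw G) {u a b c : V}
    (hua : G.Adj u a) (hub : G.Adj u b) (huc : G.Adj u c)
    (hab : ¬ G.Adj a b) (hac : ¬ G.Adj a c) (hab' : a ≠ b) (hac' : a ≠ c) (hbc' : b ≠ c) :
    G.Adj b c := by
  by_contra hbc
  let f : Fin 1 ⊕ Fin 3 → V := Sum.elim (fun _ => u) ![a, b, c]
  have hf : Function.Injective f := by
    rintro (i | i) (j | j) h <;> fin_cases i <;> try fin_cases j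
    all_goals simp_all [f, eq_comm, hua.ne, hub.ne, huc.ne]
  refine hG.false ⟨⟨f, hf⟩, ?_⟩
  rintro (i | i) (j | j) <;> fin_cases i <;> try fin_cases j
  all_goals simp_all [f, claw, G.adj_comm]

theorem stmt_7_general {V : Type*} (G : SimpleGraph V)
    (hclaw : _root_.Free claw G) (u : V)
    (Q : Finset V) (hQsub : ↑Q ⊆ G.neighborSet u)
    (R : Set V) (hR : R = G.neighborSet u \ ↑Q)
    (x y : V) (hx : x ∈ R) (hy : y ∈ R) (hxy : ¬ G.Adj x y) (hxyne : x ≠ y)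
    (z w : V) (hz : z ∈ Q) (hw : w ∈ Q) (hxz : ¬ G.Adj x z) (hyw : ¬ G.Adj y w) :
    z ≠ w ∧ G.Adj x w ∧ G.Adj y z := by
  subst hR
  obtain ⟨hux, hxQ⟩ := hx
  obtain ⟨huy, hyQ⟩ := hy
  have hyz : G.Adj y z := hclaw.adj_of_claw hux huy (hQsub hz) hxy hxz hxyne
    (hz.ne_of_notMem hxQ).symm (hz.ne_of_notMem hyQ).symm
  have hxw : G.Adj x w := hclaw.adj_of_claw huy hux (hQsub hw) (fun h => hxy h.symm) hyw
    hxyne.symm (hw.ne_of_notMem hyQ).symm (hw.ne_of_notMem hxQ).symm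
  exact ⟨fun hzw => hyw (hzw ▸ hyz), hxw, hyz⟩

theorem stmt_7 {V : Type*} [Fintype V] (G : SimpleGraph V)
    (hclaw : _root_.Free claw G) (u : V)
    (Q : Finset V) (hQclique : G.IsClique ↑Q) (hQsub : ↑Q ⊆ G.neighborSet u)
    (hQmax : ∀ Q' : Finset V, G.IsClique ↑Q' → ↑Q' ⊆ G.neighborSet u → Q'.card ≤ Q.card)
    (R : Set V) (hR : R = G.neighborSet u \ ↑Q)
    (x y : V) (hx : x ∈ R) (hy : y ∈ R) (hxy : ¬ G.Adj x y) (hxyne : x ≠ y)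
    (z w : V) (hz : z ∈ Q) (hw : w ∈ Q) (hxz : ¬ G.Adj x z) (hyw : ¬ G.Adj y w) :
    z ≠ w ∧ G.Adj x w ∧ G.Adj y z :=
  stmt_7_general G hclaw u Q hQsub R hR x y hx hy hxy hxyne z w hz hw hxz hyw
end

section
/- Let G be a finite simple graph that is K_{1,3}-free and ((K_2 ∪ K_1) + K_2)-free, u a vertex, Q a maximum clique in the induced subgraph on N(u), and R = N(u) \ Q. If |R| = 1 with R = {r}, then either r is nonadjacent to all vertices of Q, or r is nonadjacent to exactly one vertex of Q. -/
open SimpleGraph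

/-!
By maximality of `Q`, the vertex `r` misses some `q₁ ∈ Q`. If `r` also saw some `q₀ ∈ Q` and missed
a second `q₂ ∈ Q`, then the edge `q₁q₂`, the vertex `r` and the edge `uq₀` would induce
`(K₂ ∪ K₁) + K₂`.
-/

theorem SimpleGraph.IsClique.exists_not_adj_of_forall_card_le {V : Type*} {G : SimpleGraph V}
    {S : Set V} {Q : Finset V} (hQ : G.IsClique ↑Q) (hQS : ↑Q ⊆ S)
    (hQmax : ∀ Q' : Finset V, G.IsClique ↑Q' → ↑Q' ⊆ S → Q'.card ≤ Q.card)
    {r : V} (hrS : r ∈ S) (hrQ : r ∉ Q) : ∃ q ∈ Q, ¬ G.Adj r q := by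
  by_contra! hadj
  have hclique : G.IsClique ↑(Q.cons r hrQ) := by
    rw [Finset.coe_cons]
    exact hQ.insert fun q hq _ ↦ hadj q hq
  have hsub : ↑(Q.cons r hrQ) ⊆ S := by
    rw [Finset.coe_cons]
    exact Set.insert_subset hrS hQS
  simpa using hQmax _ hclique hsub

/-- Otherwise `a, b, c, x, y` induce `kkJoin`, in the order of its labels `0, …, 4`. -/
theorem Free.adj_or_adj_of_kkJoin {V : Type*} {G : SimpleGraph V} (hkk : _root_.Free kkJoin G)
    {a b c x y : V} (hab : G.Adj a b) (hxy : G.Adj x y) (hxa : G.Adj x a) (hxb : G.Adj x b)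
    (hxc : G.Adj x c) (hya : G.Adj y a) (hyb : G.Adj y b) (hyc : G.Adj y c)
    (hca : c ≠ a) (hcb : c ≠ b) : G.Adj c a ∨ G.Adj c b := by
  by_contra! ⟨hnca, hncb⟩
  have hinj : Function.Injective ![a, b, c, x, y] := by
    intro i j h
    fin_cases i <;> fin_cases j <;> simp_all
  refine hkk.false ⟨⟨![a, b, c, x, y], hinj⟩, ?_⟩
  intro i j
  fin_cases i <;> fin_cases j <;> simp_all [kkJoin, G.adj_comm]

theorem stmt_8_general {V : Type*} (G : SimpleGraph V)
    (hkk : _root_.Free kkJoin G) (u : V)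
    (Q : Finset V) (hQclique : G.IsClique ↑Q) (hQsub : ↑Q ⊆ G.neighborSet u)
    (hQmax : ∀ Q' : Finset V, G.IsClique ↑Q' → ↑Q' ⊆ G.neighborSet u → Q'.card ≤ Q.card)
    (r : V) (hR : G.neighborSet u \ ↑Q = {r}) :
    (∀ q ∈ Q, ¬ G.Adj r q) ∨ (∃! q, q ∈ Q ∧ ¬ G.Adj r q) := by
  have hr : r ∈ G.neighborSet u \ ↑Q := hR ▸ rfl
  have hur : G.Adj u r := hr.1
  have hrQ : r ∉ Q := hr.2
  refine or_iff_not_imp_left.2 fun hall ↦ ?_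
  push Not at hall
  obtain ⟨q₀, hq₀, hrq₀⟩ := hall
  obtain ⟨q₁, hq₁, hrq₁⟩ := hQclique.exists_not_adj_of_forall_card_le hQsub hQmax hur hrQ
  refine ⟨q₁, ⟨hq₁, hrq₁⟩, fun q₂ ⟨hq₂, hrq₂⟩ ↦ by_contra fun hne ↦ ?_⟩
  have hQadj : ∀ {p q}, p ∈ Q → q ∈ Q → p ≠ q → G.Adj p q := fun hp hq ↦ hQclique hp hq
  have hne₀ : ∀ {q}, ¬ G.Adj r q → q₀ ≠ q := fun h e ↦ h (e ▸ hrq₀)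
  have hrne : ∀ {q}, q ∈ Q → r ≠ q := fun hq e ↦ hrQ (e ▸ hq)
  exact (hkk.adj_or_adj_of_kkJoin (hQadj hq₂ hq₁ hne) (hQsub hq₀) (hQsub hq₂) (hQsub hq₁) hur
    (hQadj hq₀ hq₂ (hne₀ hrq₂)) (hQadj hq₀ hq₁ (hne₀ hrq₁)) hrq₀.symm
    (hrne hq₂) (hrne hq₁)).elim hrq₂ hrq₁

theorem stmt_8 {V : Type*} [Fintype V] (G : SimpleGraph V)
    (hclaw : _root_.Free claw G) (hkk : _root_.Free kkJoin G) (u : V)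
    (Q : Finset V) (hQclique : G.IsClique ↑Q) (hQsub : ↑Q ⊆ G.neighborSet u)
    (hQmax : ∀ Q' : Finset V, G.IsClique ↑Q' → ↑Q' ⊆ G.neighborSet u → Q'.card ≤ Q.card)
    (r : V) (hR : G.neighborSet u \ ↑Q = {r}) :
    (∀ q ∈ Q, ¬ G.Adj r q) ∨ (∃! q, q ∈ Q ∧ ¬ G.Adj r q) :=
  stmt_8_general G hkk u Q hQclique hQsub hQmax r hR
end

section
/- Let G be a finite simple graph that is K_{1,3}-free and ((K_2 ∪ K_1) + K_2)-free, u a vertex, Q a maximum clique in the induced subgraph on N(u), and R = N(u) \ Q. If some vertex x ∈ R has at least two non-neighbors in Q, then x is nonadjacent to every vertex of Q. -/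
open SimpleGraph

/-!
If `x` were adjacent to some `q ∈ Q`, then `q ≠ y, z`, and the vertices `y, z, x, u, q` would induce
`(K_2 ∪ K_1) + K_2`: the edge `yz` together with the isolated vertex `x`, joined to the edge `uq`.
-/

namespace SimpleGraph

variable {V : Type*} {G : SimpleGraph V} {a b c d e : V}

def kkJoinEmbedding (hab : G.Adj a b) (hde : G.Adj d e) (had : G.Adj a d) (hae : G.Adj a e)
    (hbd : G.Adj b d) (hbe : G.Adj b e) (hcd : G.Adj c d) (hce : G.Adj c e)
    (hca : ¬ G.Adj c a) (hcb : ¬ G.Adj c b) : kkJoin ↪g G where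
  toFun := ![a, b, c, d, e]
  inj' := by
    intro i j hij
    fin_cases i <;> fin_cases j <;> simp_all [G.adj_comm]
  map_rel_iff' {i j} := by
    change G.Adj (![a, b, c, d, e] i) (![a, b, c, d, e] j) ↔ kkJoin.Adj i j
    fin_cases i <;> fin_cases j <;> simp_all [kkJoin, Sym2.eq, G.adj_comm]

end SimpleGraph

theorem stmt_9_general {V : Type*} (G : SimpleGraph V)
    (hkk : _root_.Free kkJoin G) (u : V)
    (Q : Finset V) (hQclique : G.IsClique ↑Q) (hQsub : ↑Q ⊆ G.neighborSet u)
    (x : V) (hx : x ∈ G.neighborSet u \ ↑Q)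
    (y z : V) (hy : y ∈ Q) (hz : z ∈ Q) (hyz : y ≠ z)
    (hxy : ¬ G.Adj x y) (hxz : ¬ G.Adj x z) :
    ∀ q ∈ Q, ¬ G.Adj x q := by
  intro q hq hxq
  have hqy : q ≠ y := by rintro rfl; exact hxy hxq
  have hqz : q ≠ z := by rintro rfl; exact hxz hxq
  exact hkk.false <| kkJoinEmbedding (hQclique hy hz hyz) (hQsub hq)
    (hQsub hy).symm (hQclique hy hq hqy.symm) (hQsub hz).symm (hQclique hz hq hqz.symm)
    hx.1.symm hxq hxy hxz

theorem stmt_9 {V : Type*} [Fintype V] (G : SimpleGraph V)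
    (hclaw : _root_.Free claw G) (hkk : _root_.Free kkJoin G) (u : V)
    (Q : Finset V) (hQclique : G.IsClique ↑Q) (hQsub : ↑Q ⊆ G.neighborSet u)
    (hQmax : ∀ Q' : Finset V, G.IsClique ↑Q' → ↑Q' ⊆ G.neighborSet u → Q'.card ≤ Q.card)
    (x : V) (hx : x ∈ G.neighborSet u \ ↑Q)
    (y z : V) (hy : y ∈ Q) (hz : z ∈ Q) (hyz : y ≠ z)
    (hxy : ¬ G.Adj x y) (hxz : ¬ G.Adj x z) :
    ∀ q ∈ Q, ¬ G.Adj x q :=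
  stmt_9_general G hkk u Q hQclique hQsub x hx y z hy hz hyz hxy hxz
end

section
/- Let G be a finite simple graph that is K_{1,3}-free and ((K_2 ∪ K_1) + K_2)-free with ω(G) ≥ 4. Then for every vertex v lying in a clique of size ω(G), the induced subgraph on N(v) is neither a 5-cycle nor a path on 4 vertices. -/
open SimpleGraph

/-! A clique of size `ω(G) ≥ 4` through `v` leaves a triangle in `N(v)`, while `C₅` and `P₄`
are triangle-free. -/

namespace SimpleGraph

theorem cycleGraph_five_cliqueFree_three : (cycleGraph 5).CliqueFree 3 := by
  rintro s hs
  obtain ⟨a, b, c, hab, hac, hbc, rfl⟩ := is3Clique_iff.mp hs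
  revert a b c
  simp only [cycleGraph_adj']
  decide

theorem pathGraph_cliqueFree_three (n : ℕ) : (pathGraph n).CliqueFree 3 :=
  (pathGraph.bicoloring n).colorable.cliqueFree (by norm_num)

theorem IsNClique.not_cliqueFree_induce_neighborSet {V : Type*} {G : SimpleGraph V}
    {n : ℕ} {s : Finset V} {v : V} (hs : G.IsNClique (n + 1) s) (hv : v ∈ s) :
    ¬ (G.induce (G.neighborSet v)).CliqueFree n := by
  classical
  rw [cliqueFree_induce_iff]
  refine fun h ↦ h (t := s.erase v) (fun w hw ↦ ?_) (hs.erase_of_mem hv)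
  obtain ⟨hwv, hws⟩ := Finset.mem_erase.mp hw
  exact hs.isClique hv hws hwv.symm

end SimpleGraph

theorem stmt_10_general {V : Type*} (G : SimpleGraph V)
    (hω : 4 ≤ G.cliqueNum) :
    ∀ v : V, (∃ s : Finset V, G.IsNClique G.cliqueNum s ∧ v ∈ s) →
      ¬ Nonempty (G.induce (G.neighborSet v) ≃g cycleGraph 5) ∧
      ¬ Nonempty (G.induce (G.neighborSet v) ≃g pathGraph 4) := by
  rintro v ⟨s, hs, hv⟩
  obtain ⟨n, hn⟩ : ∃ n, G.cliqueNum = n + 1 := ⟨G.cliqueNum - 1, by omega⟩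
  have hN : ¬ (G.induce (G.neighborSet v)).CliqueFree 3 := fun h ↦
    (hn ▸ hs).not_cliqueFree_induce_neighborSet hv (h.mono (by omega))
  exact ⟨fun ⟨e⟩ ↦ hN (cycleGraph_five_cliqueFree_three.comap e.isContained),
    fun ⟨e⟩ ↦ hN ((pathGraph_cliqueFree_three 4).comap e.isContained)⟩

theorem stmt_10 {V : Type*} [Fintype V] (G : SimpleGraph V)
    (hclaw : _root_.Free claw G) (hkk : _root_.Free kkJoin G) (hω : 4 ≤ G.cliqueNum) :
    ∀ v : V, (∃ s : Finset V, G.IsNClique G.cliqueNum s ∧ v ∈ s) →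
      ¬ Nonempty (G.induce (G.neighborSet v) ≃g cycleGraph 5) ∧
      ¬ Nonempty (G.induce (G.neighborSet v) ≃g pathGraph 4) :=
  stmt_10_general G hω
end

section
/- Let G be a finite simple K_{1,3}-free graph with a proper coloring, and let v be a vertex colored a whose only neighbor colored b is a unique vertex w. If H is the connected component containing w of the subgraph induced by the vertices colored a or b, then H is a path. -/
open SimpleGraph

/-!
In the subgraph induced by two colour classes, all neighbours of a vertex `x` carry the colour
that `x` does not, so they are pairwise non-adjacent in `G`; claw-freeness then bounds every
degree by two. A connected graph of maximum degree two with a vertex `v` of degree at most one is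
a path: a path from `v` that cannot be extended is induced and closed under adjacency, hence spans
the graph. In the component of `w`, the vertex `v` has degree one.
-/

namespace SimpleGraph

variable {V : Type*} {G : SimpleGraph V}

theorem Embedding.ncard_neighborSet_le {W : Type*} {G' : SimpleGraph W} [Finite W]
    (f : G ↪g G') (v : V) : (G.neighborSet v).ncard ≤ (G'.neighborSet (f v)).ncard :=
  Set.ncard_le_ncard_of_injOn f (fun _ hx ↦ f.map_adj_iff.2 hx) f.injective.injOn

theorem eq_or_eq_of_ncard_neighborSet_le_two [Finite V] {x y₁ y₂ y₃ : V}
    (hx : (G.neighborSet x).ncard ≤ 2) (h₁ : G.Adj x y₁) (h₂ : G.Adj x y₂) (h₃ : G.Adj x y₃)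
    (hne : y₁ ≠ y₂) : y₃ = y₁ ∨ y₃ = y₂ := by
  by_contra! h
  exact hx.not_gt ((Set.two_lt_ncard).2 ⟨y₁, h₁, y₂, h₂, y₃, h₃, hne, h.1.symm, h.2.symm⟩)

theorem Walk.mem_of_forall_adj_mem {s : Set V} (hs : ∀ x y, G.Adj x y → x ∈ s → y ∈ s) :
    ∀ {x y : V} (_ : G.Walk x y), x ∈ s → y ∈ s
  | _, _, .nil, hx => hx
  | _, _, .cons h q, hx => mem_of_forall_adj_mem hs q (hs _ _ h hx)

theorem exists_isPath_forall_adj_mem_support [Finite V] (v : V) :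
    ∃ (u : V) (p : G.Walk v u), p.IsPath ∧ ∀ x, G.Adj u x → x ∈ p.support := by
  by_contra! h
  have hlong : ∀ n, ∃ (u : V) (p : G.Walk v u), p.IsPath ∧ p.length = n := by
    intro n
    induction n with
    | zero => exact ⟨v, .nil, .nil, rfl⟩
    | succ n ih =>
      obtain ⟨u, p, hp, rfl⟩ := ih
      obtain ⟨x, hux, hx⟩ := h u p hp
      exact ⟨x, p.concat hux, hp.concat hx hux, p.length_concat hux⟩
  have := Fintype.ofFinite V
  obtain ⟨u, p, hp, hlen⟩ := hlong (Fintype.card V)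
  exact hp.length_lt.ne hlen

namespace Walk

variable [Finite V] {v u : V} {p : G.Walk v u}

theorem IsPath.eq_getVert_succ_or_pred_of_adj (hp : p.IsPath)
    (hdeg : ∀ x, (G.neighborSet x).ncard ≤ 2) (hv : (G.neighborSet v).ncard ≤ 1)
    {i : ℕ} (hi : i < p.length) {x : V} (hx : G.Adj (p.getVert i) x) :
    x = p.getVert (i + 1) ∨ i ≠ 0 ∧ x = p.getVert (i - 1) := by
  have hnext := p.adj_getVert_succ hi
  rcases i with _ | k
  · left
    rw [getVert_zero] at hx hnext
    exact (Set.ncard_le_one_iff).1 hv hx hnext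
  · have hprev := (p.adj_getVert_succ (i := k) (by omega)).symm
    have hne : p.getVert k ≠ p.getVert (k + 2) := fun h ↦
      absurd (hp.getVert_injOn (by simp; omega) (by simp; omega) h) (by omega)
    rcases eq_or_eq_of_ncard_neighborSet_le_two (hdeg _) hprev hnext hx hne with h | h
    · exact .inr ⟨by omega, h⟩
    · exact .inl h

theorem IsPath.adj_getVert_iff (hp : p.IsPath)
    (hdeg : ∀ x, (G.neighborSet x).ncard ≤ 2) (hv : (G.neighborSet v).ncard ≤ 1)
    {i j : ℕ} (hi : i ≤ p.length) (hj : j ≤ p.length) :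
    G.Adj (p.getVert i) (p.getVert j) ↔ i + 1 = j ∨ j + 1 = i := by
  have hsucc : ∀ {i j : ℕ}, i < j → j ≤ p.length → G.Adj (p.getVert i) (p.getVert j) →
      j = i + 1 := by
    intro i j hij hj h
    rcases hp.eq_getVert_succ_or_pred_of_adj hdeg hv (by omega) h with h' | ⟨-, h'⟩
    · exact hp.getVert_injOn hj (by simp; omega) h'
    · exact absurd (hp.getVert_injOn hj (by simp; omega) h') (by omega)
  constructor
  · intro h
    rcases lt_trichotomy i j with hij | rfl | hij
    · exact .inl (hsucc hij hj h).symm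
    · exact absurd h (G.loopless.irrefl _)
    · exact .inr (hsucc hij hi h.symm).symm
  · rintro (rfl | rfl)
    · exact p.adj_getVert_succ (by omega)
    · exact (p.adj_getVert_succ (by omega)).symm

end Walk

open Walk in
theorem Connected.isPathGraph [Finite V] (hconn : G.Connected)
    (hdeg : ∀ x, (G.neighborSet x).ncard ≤ 2) {v : V} (hv : (G.neighborSet v).ncard ≤ 1) :
    IsPathGraph G := by
  obtain ⟨u, p, hp, hu⟩ := exists_isPath_forall_adj_mem_support (G := G) v
  have hclosed : ∀ x y, G.Adj x y → x ∈ p.support → y ∈ p.support := by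
    intro x y hxy hx
    obtain ⟨i, rfl, hi⟩ := mem_support_iff_exists_getVert.1 hx
    rcases hi.lt_or_eq with hi | rfl
    · rcases hp.eq_getVert_succ_or_pred_of_adj hdeg hv hi hxy with rfl | ⟨-, rfl⟩ <;>
        exact p.getVert_mem_support _
    · exact hu y (by rwa [getVert_length] at hxy)
  have hsurj : ∀ x, ∃ i ≤ p.length, p.getVert i = x := fun x ↦ by
    obtain ⟨i, hi, hle⟩ := mem_support_iff_exists_getVert.1
      (mem_of_forall_adj_mem hclosed (hconn.preconnected v x).some p.start_mem_support)
    exact ⟨i, hle, hi⟩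
  let e : Fin (p.length + 1) ≃ V := Equiv.ofBijective (fun i ↦ p.getVert i)
    ⟨fun i j h ↦ Fin.ext (hp.getVert_injOn (by simp; omega) (by simp; omega) h), fun x ↦
      let ⟨i, hi, hx⟩ := hsurj x; ⟨⟨i, by omega⟩, hx⟩⟩
  exact ⟨_, ⟨(RelIso.mk e fun {i j} ↦
    (hp.adj_getVert_iff hdeg hv (by omega) (by omega)).trans pathGraph_adj.symm).symm⟩⟩

end SimpleGraph

theorem Free.eq_or_eq_or_eq_of_adj {V : Type*} {G : SimpleGraph V} (hG : _root_.Free claw G)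
    {x y₁ y₂ y₃ : V} (h₁ : G.Adj x y₁) (h₂ : G.Adj x y₂) (h₃ : G.Adj x y₃)
    (h₁₂ : ¬G.Adj y₁ y₂) (h₁₃ : ¬G.Adj y₁ y₃) (h₂₃ : ¬G.Adj y₂ y₃) :
    y₁ = y₂ ∨ y₁ = y₃ ∨ y₂ = y₃ := by
  by_contra! hne
  obtain ⟨n₁₂, n₁₃, n₂₃⟩ := hne
  let φ : Fin 1 ⊕ Fin 3 → V := Sum.elim (fun _ ↦ x) ![y₁, y₂, y₃]
  have hφ : Function.Injective φ := by
    rintro (i | i) (j | j) h <;> fin_cases i <;> try fin_cases j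
    all_goals simp_all [φ, h₁.ne, h₂.ne, h₃.ne, h₁.ne', h₂.ne', h₃.ne', Ne.symm]
  refine hG.false ⟨⟨φ, hφ⟩, fun {i j} ↦ ?_⟩
  rcases i with i | i <;> rcases j with j | j <;> fin_cases i <;> fin_cases j <;>
    simp [φ, claw, h₁, h₂, h₃, h₁.symm, h₂.symm, h₃.symm, h₁₂, h₁₃, h₂₃, G.adj_comm]

namespace SimpleGraph.Coloring

variable {V α : Type*} {G : SimpleGraph V} (C : G.Coloring α) {a b : α}

theorem color_eq_of_adj_of_adj {x y z : {x | C x = a ∨ C x = b}} (hy : G.Adj x y)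
    (hz : G.Adj x z) : C y = C z := by
  have := C.valid hy
  have := C.valid hz
  rcases x.2 with hx | hx <;> rcases y.2 with hy | hy <;> rcases z.2 with hz | hz <;> simp_all

theorem ncard_neighborSet_induce_le_one [Finite V] {v w : V} (hva : C v = a)
    (huniq : ∀ w', G.Adj v w' → C w' = b → w' = w) :
    ((G.induce {x | C x = a ∨ C x = b}).neighborSet ⟨v, Or.inl hva⟩).ncard ≤ 1 := by
  have hw (y : {x | C x = a ∨ C x = b}) (hy : G.Adj v y) : (y : V) = w :=
    huniq y hy (y.2.resolve_left fun h ↦ C.valid hy (hva.trans h.symm))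
  exact (Set.ncard_le_one_iff).2 fun hy hz ↦ Subtype.ext ((hw _ hy).trans (hw _ hz).symm)

end SimpleGraph.Coloring

theorem Free.ncard_neighborSet_induce_le_two {V α : Type*} [Finite V] {G : SimpleGraph V}
    (hG : _root_.Free claw G) (C : G.Coloring α) (a b : α) (x : {x | C x = a ∨ C x = b}) :
    ((G.induce {x | C x = a ∨ C x = b}).neighborSet x).ncard ≤ 2 := by
  rw [← not_lt, Set.two_lt_ncard]
  rintro ⟨y₁, h₁, y₂, h₂, y₃, h₃, n₁₂, n₁₃, n₂₃⟩
  have hindep {y z : {x | C x = a ∨ C x = b}} (hy : G.Adj x y) (hz : G.Adj x z) :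
      ¬G.Adj y z := fun h ↦ C.valid h (C.color_eq_of_adj_of_adj hy hz)
  rcases hG.eq_or_eq_or_eq_of_adj h₁ h₂ h₃ (hindep h₁ h₂) (hindep h₁ h₃) (hindep h₂ h₃)
    with h | h | h
  exacts [n₁₂ (Subtype.ext h), n₁₃ (Subtype.ext h), n₂₃ (Subtype.ext h)]

theorem stmt_12 {V α : Type*} [Fintype V] (G : SimpleGraph V) (hclaw : _root_.Free claw G)
    (C : G.Coloring α) (a b : α) (v w : V)
    (hva : C v = a) (hvw : G.Adj v w) (hwb : C w = b)
    (huniq : ∀ w', G.Adj v w' → C w' = b → w' = w) :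
    IsPathGraph ((G.induce {x | C x = a ∨ C x = b}).induce
      ((G.induce {x | C x = a ∨ C x = b}).connectedComponentMk
        ⟨w, Or.inr hwb⟩).supp) := by
  set c := (G.induce {x | C x = a ∨ C x = b}).connectedComponentMk ⟨w, Or.inr hwb⟩
  have hv : ⟨v, Or.inl hva⟩ ∈ c.supp := ConnectedComponent.sound (Adj.reachable hvw)
  refine c.connected_toSimpleGraph.isPathGraph (fun x ↦ ?_) (v := ⟨_, hv⟩) ?_
  · exact ((Embedding.induce _).ncard_neighborSet_le x).trans
      (hclaw.ncard_neighborSet_induce_le_two C a b _)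
  · exact ((Embedding.induce _).ncard_neighborSet_le _).trans
      (C.ncard_neighborSet_induce_le_one hva huniq)
end

section
/- Let G be a finite simple K_{1,3}-free graph, u a vertex, Q a maximum clique in N(u), and R = N(u) \ Q. If |Q| = 2 and there exist nonadjacent x, y ∈ R and a third vertex v ∈ R \ {x, y} with |N(u)| > 4, and G is also ((K_2 ∪ K_1) + K_2)-free, then the induced subgraph on N(u) is a 5-cycle. -/
open SimpleGraph

/-!
Claw-freeness says that `N(u)` contains no independent set of size 3, and `|Q| = 2` that it
contains no triangle. In a graph with neither, every vertex has at most two neighbours and at most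
two non-neighbours, so there are at most five vertices (this is `R(3,3) = 6`). With exactly five,
a vertex `v` has two neighbours `a, b` and two non-neighbours `c, d`, and the two forbidden
configurations force the 5-cycle `v a c d b` with all its chords missing.
-/

namespace SimpleGraph

variable {V W : Type*} {G : SimpleGraph V} {H : SimpleGraph W} {a b c d : W}

lemma not_adj_of_cliqueFree_three (h3 : H.CliqueFree 3) (hab : H.Adj a b) (hac : H.Adj a c) :
    ¬H.Adj b c := by
  classical
  exact fun hbc => h3 {a, b, c} (is3Clique_triple_iff.2 ⟨hab, hac, hbc⟩)

lemma adj_of_compl_cliqueFree_three (hc3 : Hᶜ.CliqueFree 3) (hab : a ≠ b) (hac : a ≠ c)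
    (hbc : b ≠ c) (nab : ¬H.Adj a b) (nac : ¬H.Adj a c) : H.Adj b c := by
  by_contra nbc
  exact not_adj_of_cliqueFree_three hc3 ((compl_adj _ _ _).2 ⟨hab, nab⟩)
    ((compl_adj _ _ _).2 ⟨hac, nac⟩) ((compl_adj _ _ _).2 ⟨hbc, nbc⟩)

lemma false_of_three_adj (h3 : H.CliqueFree 3) (hc3 : Hᶜ.CliqueFree 3) (hbc : b ≠ c)
    (hbd : b ≠ d) (hcd : c ≠ d) (hab : H.Adj a b) (hac : H.Adj a c) (had : H.Adj a d) : False :=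
  not_adj_of_cliqueFree_three h3 hac had <|
    adj_of_compl_cliqueFree_three hc3 hbc hbd hcd (not_adj_of_cliqueFree_three h3 hab hac)
      (not_adj_of_cliqueFree_three h3 hab had)

lemma adj_or_adj_or_adj (h3 : H.CliqueFree 3) (hc3 : Hᶜ.CliqueFree 3) (hab : a ≠ b)
    (hac : a ≠ c) (had : a ≠ d) (hbc : b ≠ c) (hbd : b ≠ d) (hcd : c ≠ d) :
    H.Adj a b ∨ H.Adj a c ∨ H.Adj a d := by
  by_contra! h
  exact false_of_three_adj hc3 (by rwa [compl_compl]) hbc hbd hcd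
    ((compl_adj _ _ _).2 ⟨hab, h.1⟩) ((compl_adj _ _ _).2 ⟨hac, h.2.1⟩)
    ((compl_adj _ _ _).2 ⟨had, h.2.2⟩)

lemma degree_le_two (h3 : H.CliqueFree 3) (hc3 : Hᶜ.CliqueFree 3) (v : W)
    [Fintype (H.neighborSet v)] : H.degree v ≤ 2 := by
  by_contra! hv
  obtain ⟨b, c, d, hb, hc, hd, hbc, hbd, hcd⟩ := Finset.two_lt_card_iff.1 hv
  rw [mem_neighborFinset] at hb hc hd
  exact false_of_three_adj h3 hc3 hbc hbd hcd hb hc hd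

lemma card_le_five [Fintype W] (h3 : H.CliqueFree 3) (hc3 : Hᶜ.CliqueFree 3) :
    Fintype.card W ≤ 5 := by
  classical
  rcases isEmpty_or_nonempty W with hW | ⟨⟨v⟩⟩
  · simp
  have hcompl := H.degree_compl v
  have hH := degree_le_two h3 hc3 v
  have hHc := degree_le_two hc3 (by rwa [compl_compl]) v
  omega

lemma adj_iff_cycleGraph_five {f : Fin 5 → W} (hadj : ∀ i, H.Adj (f i) (f (i + 1)))
    (hnon : ∀ i, ¬H.Adj (f i) (f (i + 2))) (i j : Fin 5) :
    H.Adj (f i) (f j) ↔ (cycleGraph 5).Adj i j := by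
  obtain ⟨d, rfl⟩ : ∃ d, j = i + d := ⟨j - i, by abel⟩
  have hcycle : ∀ i d : Fin 5, (cycleGraph 5).Adj i (i + d) ↔ d = 1 ∨ d = 4 := by decide
  have hback : ∀ i : Fin 5, (i + 3) + 2 = i ∧ (i + 4) + 1 = i := by decide
  rw [hcycle]
  fin_cases d
  · simp
  · simpa using hadj i
  · simpa using hnon i
  · simpa [(hback i).1, adj_comm] using hnon (i + 3)
  · simpa [(hback i).2, adj_comm] using hadj (i + 4)

lemma exists_cycle_five [Fintype W] (h3 : H.CliqueFree 3) (hc3 : Hᶜ.CliqueFree 3)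
    (hcard : Fintype.card W = 5) :
    ∃ f : Fin 5 → W, (∀ i, H.Adj (f i) (f (i + 1))) ∧ ∀ i, ¬H.Adj (f i) (f (i + 2)) := by
  classical
  have h3' : Hᶜᶜ.CliqueFree 3 := by rwa [compl_compl]
  obtain ⟨v⟩ : Nonempty W := Fintype.card_pos_iff.1 (by omega)
  have hdeg := degree_le_two h3 hc3 v
  have hdegc := degree_le_two hc3 h3' v
  have hcompl := H.degree_compl v
  obtain ⟨a, b, hab, hN⟩ := Finset.card_eq_two.1 <|
    show (H.neighborFinset v).card = 2 by rw [card_neighborFinset_eq_degree]; omega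
  obtain ⟨c, d, hcd, hNc⟩ := Finset.card_eq_two.1 <|
    show (Hᶜ.neighborFinset v).card = 2 by rw [card_neighborFinset_eq_degree]; omega
  have hva : H.Adj v a := by rw [← mem_neighborFinset, hN]; simp
  have hvb : H.Adj v b := by rw [← mem_neighborFinset, hN]; simp
  have hvc : Hᶜ.Adj v c := by rw [← mem_neighborFinset, hNc]; simp
  have hvd : Hᶜ.Adj v d := by rw [← mem_neighborFinset, hNc]; simp
  clear hN hNc
  have hne : ∀ {x y}, H.Adj v x → Hᶜ.Adj v y → x ≠ y := fun hx hy hxy =>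
    ((compl_adj _ _ _).1 hy).2 (hxy ▸ hx)
  have nab : ¬H.Adj a b := not_adj_of_cliqueFree_three h3 hva hvb
  have hac_or : H.Adj a c ∨ H.Adj a d :=
    (adj_or_adj_or_adj h3 hc3 hab (hne hva hvc) (hne hva hvd) (hne hvb hvc) (hne hvb hvd)
      hcd).resolve_left nab
  wlog hac : H.Adj a c generalizing c d
  · exact this d c hcd.symm hvd hvc hac_or.symm (hac_or.resolve_left hac)
  obtain ⟨vc, nvc⟩ := (compl_adj _ _ _).1 hvc
  obtain ⟨vd, nvd⟩ := (compl_adj _ _ _).1 hvd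
  have hcd_adj : H.Adj c d := adj_of_compl_cliqueFree_three hc3 vc vd hcd nvc nvd
  have nad : ¬H.Adj a d := not_adj_of_cliqueFree_three h3 hac.symm hcd_adj
  have nbc : ¬H.Adj b c := fun hbc =>
    false_of_three_adj h3 hc3 hab (hne hva hvd) (hne hvb hvd) hac.symm hbc.symm hcd_adj
  have hbd : H.Adj b d :=
    ((adj_or_adj_or_adj h3 hc3 hab.symm (hne hvb hvc) (hne hvb hvd) (hne hva hvc) (hne hva hvd)
      hcd).resolve_left fun h => nab h.symm).resolve_left nbc
  refine ⟨![v, a, c, d, b], fun i => ?_, fun i => ?_⟩ <;> fin_cases i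
  all_goals simp [adj_comm, hva, hvb, hac, hbd, hcd_adj, nvc, nvd, nab, nad, nbc]

lemma nonempty_iso_cycleGraph_five_of_cycle [Fintype W] (hcard : Fintype.card W = 5)
    {f : Fin 5 → W} (hadj : ∀ i, H.Adj (f i) (f (i + 1)))
    (hnon : ∀ i, ¬H.Adj (f i) (f (i + 2))) : Nonempty (H ≃g cycleGraph 5) := by
  have htwin : ∀ i j : Fin 5,
      (∀ k, (cycleGraph 5).Adj k i ↔ (cycleGraph 5).Adj k j) → i = j := by decide
  have hf : Function.Injective f := fun i j hij => htwin i j fun k => by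
    rw [← adj_iff_cycleGraph_five hadj hnon, ← adj_iff_cycleGraph_five hadj hnon, hij]
  have hbij : Function.Bijective f :=
    (Fintype.bijective_iff_injective_and_card f).2 ⟨hf, by simp [hcard]⟩
  exact ⟨(⟨Equiv.ofBijective f hbij, adj_iff_cycleGraph_five hadj hnon _ _⟩ :
    cycleGraph 5 ≃g H).symm⟩

lemma nonempty_iso_cycleGraph_five [Fintype W] (h3 : H.CliqueFree 3) (hc3 : Hᶜ.CliqueFree 3)
    (hcard : Fintype.card W = 5) : Nonempty (H ≃g cycleGraph 5) :=
  let ⟨_, hadj, hnon⟩ := exists_cycle_five h3 hc3 hcard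
  nonempty_iso_cycleGraph_five_of_cycle hcard hadj hnon

lemma compl_induce (s : Set V) : (G.induce s)ᶜ = Gᶜ.induce s := by
  ext a b
  simp [Subtype.ext_iff]

lemma cliqueFreeOn_compl_neighborSet_of_free {n : ℕ}
    (h : _root_.Free (completeBipartiteGraph (Fin 1) (Fin n)) G) (u : V) :
    Gᶜ.CliqueFreeOn (G.neighborSet u) n := by
  intro t htu ht
  let leaf : Fin n → V := fun i => (t.equivFinOfCardEq ht.card_eq).symm i
  have hleaf_mem (i : Fin n) : leaf i ∈ t := ((t.equivFinOfCardEq ht.card_eq).symm i).2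
  have hleaf : Function.Injective leaf := Subtype.val_injective.comp (Equiv.injective _)
  refine h.false ⟨⟨Sum.elim (fun _ => u) leaf, ?_⟩, ?_⟩
  · exact (Function.injective_of_subsingleton _).sumElim hleaf fun _ i =>
      G.ne_of_adj (htu (hleaf_mem i))
  · rintro (_ | i) (_ | j)
    · simp
    · simpa using htu (hleaf_mem j)
    · simpa using (htu (hleaf_mem i)).symm
    · refine iff_of_false (fun hij => ?_) (by simp)
      exact ((compl_adj _ _ _).1 (ht.isClique (hleaf_mem i) (hleaf_mem j) hij.ne)).2 hij

end SimpleGraph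

theorem stmt_15_general {V : Type*} (G : SimpleGraph V)
    (hclaw : _root_.Free claw G) (u : V)
    (Q : Finset V)
    (hQmax : ∀ Q' : Finset V, G.IsClique ↑Q' → ↑Q' ⊆ G.neighborSet u → Q'.card ≤ Q.card)
    (hQ2 : Q.card = 2)
    (hbig : 4 < (G.neighborSet u).ncard) :
    Nonempty (G.induce (G.neighborSet u) ≃g cycleGraph 5) := by
  have : Fintype (G.neighborSet u) := (Set.finite_of_ncard_pos (by omega)).fintype
  have h3 : (G.induce (G.neighborSet u)).CliqueFree 3 := by
    rw [cliqueFree_induce_iff]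
    intro t htu ht
    have hle := hQmax t ht.isClique htu
    rw [ht.card_eq, hQ2] at hle
    omega
  have hc3 : (G.induce (G.neighborSet u))ᶜ.CliqueFree 3 := by
    rw [compl_induce, cliqueFree_induce_iff]
    exact cliqueFreeOn_compl_neighborSet_of_free hclaw u
  have hcard : Fintype.card (G.neighborSet u) = (G.neighborSet u).ncard := by
    rw [← Nat.card_eq_fintype_card, Nat.card_coe_set_eq]
  have hle5 := card_le_five h3 hc3
  exact nonempty_iso_cycleGraph_five h3 hc3 (by omega)

theorem stmt_15 {V : Type*} [Fintype V] (G : SimpleGraph V)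
    (hclaw : _root_.Free claw G) (hkk : _root_.Free kkJoin G) (u : V)
    (Q : Finset V) (hQclique : G.IsClique ↑Q) (hQsub : ↑Q ⊆ G.neighborSet u)
    (hQmax : ∀ Q' : Finset V, G.IsClique ↑Q' → ↑Q' ⊆ G.neighborSet u → Q'.card ≤ Q.card)
    (R : Set V) (hR : R = G.neighborSet u \ ↑Q)
    (hQ2 : Q.card = 2)
    (x y : V) (hx : x ∈ R) (hy : y ∈ R) (hxyne : x ≠ y) (hxy : ¬ G.Adj x y)
    (v : V) (hv : v ∈ R \ {x, y})
    (hbig : 4 < (G.neighborSet u).ncard) :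
    Nonempty (G.induce (G.neighborSet u) ≃g cycleGraph 5) :=
  stmt_15_general G hclaw u Q hQmax hQ2 hbig
end

section
/- Let G be a finite simple graph that is K_{1,3}-free and ((K_2 ∪ K_1) + K_2)-free, u a vertex, Q a maximum clique in the induced subgraph on N(u), and R = N(u) \ Q. If the induced subgraph on N(u) is neither C_5 nor P_4, then R induces a complete graph. -/
open SimpleGraph

/-!
Let `x, y ∈ R` be distinct and non-adjacent. By maximality of `Q` there are `a ∈ Q` not adjacent
to `x` and `b ∈ Q` not adjacent to `y`; as there is no claw centred at `u`, every vertex of `Q` is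
adjacent to `x` or `y`, so `x b a y` is an induced `P_4` in `N(u)`. A third vertex of `Q` would
produce, together with `u`, an induced `(K_2 ∪ K_1) + K_2`, hence `Q = {a, b}` and `N(u)` is
triangle-free. Claw-freeness then forces every other neighbour of `u` to be adjacent to exactly
`x` and `y` among the path, and there is at most one such neighbour (else a claw centred at `x`),
so `N(u)` induces `P_4` or `C_5`.
-/

open Function

section

variable {V W : Type*} {G : SimpleGraph V}

lemma injective_of_adj_iff {H : SimpleGraph W} {f : W → V}
    (hf : ∀ i j, G.Adj (f i) (f j) ↔ H.Adj i j)
    (hH : ∀ i j, i ≠ j → ∃ k, ¬(H.Adj k i ↔ H.Adj k j)) : Injective f := by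
  intro i j hij
  by_contra hne
  obtain ⟨k, hk⟩ := hH i j hne
  exact hk (by rw [← hf, ← hf, hij])

lemma nonempty_induce_range_iso {H : SimpleGraph W} {f : W → V}
    (hf : ∀ i j, G.Adj (f i) (f j) ↔ H.Adj i j)
    (hH : ∀ i j, i ≠ j → ∃ k, ¬(H.Adj k i ↔ H.Adj k j)) :
    Nonempty (G.induce (Set.range f) ≃g H) :=
  ⟨(Embedding.isoInduceRange ⟨⟨f, injective_of_adj_iff hf hH⟩, hf _ _⟩).symm⟩

lemma nonempty_induce_iso_pathGraph_four {a b c d : V} (hab : G.Adj a b) (hbc : G.Adj b c)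
    (hcd : G.Adj c d) (nac : ¬G.Adj a c) (nad : ¬G.Adj a d) (nbd : ¬G.Adj b d) :
    Nonempty (G.induce {a, b, c, d} ≃g pathGraph 4) := by
  have hf : ∀ i j, G.Adj (![a, b, c, d] i) (![a, b, c, d] j) ↔ (pathGraph 4).Adj i j := by
    intro i j
    fin_cases i <;> fin_cases j <;> simp [pathGraph_adj, G.adj_comm, *]
  have hrange : Set.range ![a, b, c, d] = {a, b, c, d} := by
    simp only [Matrix.range_cons, Matrix.range_empty, Set.union_empty, Set.singleton_union]
  exact hrange ▸ nonempty_induce_range_iso hf (by simp only [pathGraph_adj]; decide)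

lemma nonempty_induce_iso_cycleGraph_five {a b c d e : V} (hab : G.Adj a b) (hbc : G.Adj b c)
    (hcd : G.Adj c d) (hde : G.Adj d e) (hea : G.Adj e a) (nac : ¬G.Adj a c) (nad : ¬G.Adj a d)
    (nbd : ¬G.Adj b d) (nbe : ¬G.Adj b e) (nce : ¬G.Adj c e) :
    Nonempty (G.induce {a, b, c, d, e} ≃g cycleGraph 5) := by
  have hf : ∀ i j, G.Adj (![a, b, c, d, e] i) (![a, b, c, d, e] j) ↔ (cycleGraph 5).Adj i j := by
    intro i j
    fin_cases i <;> fin_cases j <;> simp +decide [G.adj_comm, hea.symm, *]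
  have hrange : Set.range ![a, b, c, d, e] = {a, b, c, d, e} := by
    simp only [Matrix.range_cons, Matrix.range_empty, Set.union_empty, Set.singleton_union]
  exact hrange ▸ nonempty_induce_range_iso hf (by decide)

lemma kkJoin_adj {i j : Fin 5} :
    kkJoin.Adj i j ↔ i ≠ j ∧ (2 < i ∨ 2 < j ∨ (i < 2 ∧ j < 2)) := by
  fin_cases i <;> fin_cases j <;> simp [kkJoin]

lemma Free.kkJoin_false (hkk : _root_.Free kkJoin G) {v₀ v₁ v₂ v₃ v₄ : V}
    (h01 : G.Adj v₀ v₁) (h34 : G.Adj v₃ v₄) (h03 : G.Adj v₀ v₃) (h04 : G.Adj v₀ v₄)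
    (h13 : G.Adj v₁ v₃) (h14 : G.Adj v₁ v₄) (h23 : G.Adj v₂ v₃) (h24 : G.Adj v₂ v₄)
    (n02 : ¬G.Adj v₀ v₂) (n12 : ¬G.Adj v₁ v₂) : False := by
  have hf : ∀ i j, G.Adj (![v₀, v₁, v₂, v₃, v₄] i) (![v₀, v₁, v₂, v₃, v₄] j) ↔ kkJoin.Adj i j := by
    intro i j
    fin_cases i <;> fin_cases j <;> simp [kkJoin_adj, G.adj_comm, *]
  exact hkk.false ⟨⟨_, injective_of_adj_iff hf (by simp only [kkJoin_adj]; decide)⟩, hf _ _⟩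

lemma Free.adj_among_three_neighbors (hclaw : _root_.Free claw G) {u x y z : V}
    (hx : G.Adj u x) (hy : G.Adj u y) (hz : G.Adj u z) (hxy : x ≠ y) (hxz : x ≠ z) (hyz : y ≠ z) :
    G.Adj x y ∨ G.Adj x z ∨ G.Adj y z := by
  by_contra! ⟨nxy, nxz, nyz⟩
  let f : Fin 1 ⊕ Fin 3 → V := Sum.elim (fun _ ↦ u) ![x, y, z]
  have hf : ∀ i j, G.Adj (f i) (f j) ↔ claw.Adj i j := by
    rintro (i | i) (j | j) <;> fin_cases i <;> fin_cases j <;> simp [f, claw, G.adj_comm, *]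
  have hinj : Injective f := by
    rintro (i | i) (j | j) h <;> fin_cases i <;> fin_cases j <;>
      simp_all [f, hx.ne, hy.ne, hz.ne, hx.ne', hy.ne', hz.ne']
  exact hclaw.false ⟨⟨f, hinj⟩, hf _ _⟩

section MaximumCliqueInNeighborhood

variable {u : V} {Q : Finset V}

lemma exists_mem_not_adj_of_not_mem (hQ : G.IsClique Q) (hQu : ↑Q ⊆ G.neighborSet u)
    (hQmax : ∀ Q' : Finset V, G.IsClique ↑Q' → ↑Q' ⊆ G.neighborSet u → Q'.card ≤ Q.card)
    {v : V} (hv : G.Adj u v) (hvQ : v ∉ Q) : ∃ c ∈ Q, ¬G.Adj v c := by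
  classical
  by_contra! h
  have := hQmax (insert v Q) (by rw [Finset.coe_insert]; exact hQ.insert fun c hc _ ↦ h c hc)
    (by rw [Finset.coe_insert]; exact Set.insert_subset hv hQu)
  rw [Finset.card_insert_of_notMem hvQ] at this
  omega

lemma not_adj_of_card_le_two
    (hQmax : ∀ Q' : Finset V, G.IsClique ↑Q' → ↑Q' ⊆ G.neighborSet u → Q'.card ≤ Q.card)
    (hQ₂ : Q.card ≤ 2) :
    ∀ p q r, G.Adj u p → G.Adj u q → G.Adj u r → G.Adj p q → G.Adj q r → ¬G.Adj p r := by
  classical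
  intro p q r hp hq hr hpq hqr hpr
  have h3 : G.IsNClique 3 {p, q, r} := is3Clique_triple_iff.2 ⟨hpq, hpr, hqr⟩
  have := hQmax _ h3.isClique (by simp [Set.insert_subset_iff, hp, hq, hr])
  rw [h3.card_eq] at this
  omega

lemma eq_or_eq_of_adj (hkk : _root_.Free kkJoin G) (hQ : G.IsClique Q)
    (hQu : ↑Q ⊆ G.neighborSet u) {x y a b c : V} (hx : G.Adj u x) (hy : G.Adj u y)
    (nxy : ¬G.Adj x y) (ha : a ∈ Q) (hb : b ∈ Q) (hc : c ∈ Q) (hya : G.Adj y a)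
    (hxb : G.Adj x b) (nyb : ¬G.Adj y b) (hxc : G.Adj x c) : c = a ∨ c = b := by
  by_contra! ⟨hca, hcb⟩
  have hua : G.Adj u a := hQu ha
  have hub : G.Adj u b := hQu hb
  have huc : G.Adj u c := hQu hc
  have nyc : ¬G.Adj y c := fun hyc ↦
    hkk.kkJoin_false hxb.symm huc hub.symm (hQ hb hc (Ne.symm hcb)) hx.symm hxc hy.symm hyc
      (fun h ↦ nyb h.symm) nxy
  exact hkk.kkJoin_false (hQ hc hb hcb) hua huc.symm (hQ hc ha hca) hub.symm
    (hQ hb ha fun h ↦ nyb (h ▸ hya)) hy.symm hya (fun h ↦ nyc h.symm) (fun h ↦ nyb h.symm)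

lemma exists_inducedPath_of_not_adj [DecidableEq V] (hclaw : _root_.Free claw G)
    (hkk : _root_.Free kkJoin G) (hQ : G.IsClique Q) (hQu : ↑Q ⊆ G.neighborSet u)
    (hQmax : ∀ Q' : Finset V, G.IsClique ↑Q' → ↑Q' ⊆ G.neighborSet u → Q'.card ≤ Q.card)
    {x y : V} (hx : G.Adj u x) (hy : G.Adj u y) (hxQ : x ∉ Q) (hyQ : y ∉ Q) (hxy : x ≠ y)
    (nxy : ¬G.Adj x y) :
    ∃ a ∈ Q, ∃ b ∈ Q, G.Adj x b ∧ G.Adj b a ∧ G.Adj a y ∧ ¬G.Adj x a ∧ ¬G.Adj b y ∧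
      Q ⊆ {a, b} := by
  obtain ⟨a, ha, nxa⟩ := exists_mem_not_adj_of_not_mem hQ hQu hQmax hx hxQ
  obtain ⟨b, hb, nyb⟩ := exists_mem_not_adj_of_not_mem hQ hQu hQmax hy hyQ
  have hQxy : ∀ c ∈ Q, G.Adj x c ∨ G.Adj y c := fun c hc ↦ by
    rcases hclaw.adj_among_three_neighbors hx hy (hQu hc) hxy (fun h ↦ hxQ (h ▸ hc))
      (fun h ↦ hyQ (h ▸ hc)) with h | h | h
    exacts [absurd h nxy, .inl h, .inr h]
  have hya := (hQxy a ha).resolve_left nxa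
  have hxb := (hQxy b hb).resolve_right nyb
  refine ⟨a, ha, b, hb, hxb, hQ hb ha fun h ↦ nyb (h ▸ hya), hya.symm, nxa, fun h ↦ nyb h.symm,
    fun c hc ↦ ?_⟩
  have : c = a ∨ c = b := by
    rcases hQxy c hc with h | h
    · exact eq_or_eq_of_adj hkk hQ hQu hx hy nxy ha hb hc hya hxb nyb h
    · exact (eq_or_eq_of_adj hkk hQ hQu hy hx (fun h ↦ nxy h.symm) hb ha hc hxb hya nxa h).symm
  simpa using this

end MaximumCliqueInNeighborhood

section TriangleFreeNeighborhood

variable {u x b a y : V}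

lemma adj_other_end_of_adj_end (hclaw : _root_.Free claw G)
    (hT : ∀ p q r, G.Adj u p → G.Adj u q → G.Adj u r → G.Adj p q → G.Adj q r → ¬G.Adj p r)
    (hx : G.Adj u x) (hb : G.Adj u b) (ha : G.Adj u a) (hy : G.Adj u y) (hxb : G.Adj x b)
    (hay : G.Adj a y) (nxy : ¬G.Adj x y) (nby : ¬G.Adj b y) {w : V} (hw : G.Adj u w)
    (hwb : w ≠ b) (hwx : G.Adj w x) :
    G.Adj w y ∧ ¬G.Adj w a ∧ ¬G.Adj w b := by
  have nyx : ¬G.Adj y x := fun h ↦ nxy h.symm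
  have nwb : ¬G.Adj w b := hT w x b hw hx hb hwx hxb
  have hwy : G.Adj w y := by
    rcases hclaw.adj_among_three_neighbors hw hb hy hwb (G.ne_of_adj_of_not_adj hwx nyx)
      (G.ne_of_adj_of_not_adj hxb.symm nyx) with h | h | h
    exacts [absurd h nwb, h, absurd h nby]
  exact ⟨hwy, hT w y a hw hy ha hwy hay.symm, nwb⟩

lemma adj_of_not_mem_inducedPath (hclaw : _root_.Free claw G)
    (hT : ∀ p q r, G.Adj u p → G.Adj u q → G.Adj u r → G.Adj p q → G.Adj q r → ¬G.Adj p r)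
    (hx : G.Adj u x) (hb : G.Adj u b) (ha : G.Adj u a) (hy : G.Adj u y) (hxb : G.Adj x b)
    (hay : G.Adj a y) (nxa : ¬G.Adj x a) (nxy : ¬G.Adj x y) (nby : ¬G.Adj b y) {w : V}
    (hw : G.Adj u w) (hwS : w ∉ ({x, b, a, y} : Set V)) :
    G.Adj w x ∧ G.Adj w y ∧ ¬G.Adj w a ∧ ¬G.Adj w b := by
  simp only [Set.mem_insert_iff, Set.mem_singleton_iff, not_or] at hwS
  obtain ⟨hwx, hwb, hwa, hwy⟩ := hwS
  rcases hclaw.adj_among_three_neighbors hw hx hy hwx hwy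
    (G.ne_of_adj_of_not_adj hxb fun h ↦ nby h.symm) with h | h | h
  · exact ⟨h, adj_other_end_of_adj_end hclaw hT hx hb ha hy hxb hay nxy nby hw hwb h⟩
  · obtain ⟨hwx, nwb, nwa⟩ := adj_other_end_of_adj_end hclaw hT hy ha hb hx hay.symm hxb.symm
      (fun h ↦ nxy h.symm) (fun h ↦ nxa h.symm) hw hwa h
    exact ⟨hwx, h, nwa, nwb⟩
  · exact absurd h nxy

lemma subsingleton_neighborSet_diff_inducedPath (hclaw : _root_.Free claw G)
    (hT : ∀ p q r, G.Adj u p → G.Adj u q → G.Adj u r → G.Adj p q → G.Adj q r → ¬G.Adj p r)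
    (hx : G.Adj u x) (hb : G.Adj u b) (ha : G.Adj u a) (hy : G.Adj u y) (hxb : G.Adj x b)
    (hay : G.Adj a y) (nxa : ¬G.Adj x a) (nxy : ¬G.Adj x y) (nby : ¬G.Adj b y) :
    (G.neighborSet u \ {x, b, a, y}).Subsingleton := by
  rintro v ⟨hv, hvS⟩ w ⟨hw, hwS⟩
  obtain ⟨hvx, -, -, nvb⟩ :=
    adj_of_not_mem_inducedPath hclaw hT hx hb ha hy hxb hay nxa nxy nby hv hvS
  obtain ⟨hwx, -, -, nwb⟩ :=
    adj_of_not_mem_inducedPath hclaw hT hx hb ha hy hxb hay nxa nxy nby hw hwS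
  by_contra hvw
  have nvw : ¬G.Adj v w := hT v x w hv hx hw hvx hwx.symm
  rcases hclaw.adj_among_three_neighbors hxb hvx.symm hwx.symm (fun h ↦ hvS (by simp [h]))
    (fun h ↦ hwS (by simp [h])) hvw with h | h | h
  exacts [nvb h.symm, nwb h.symm, nvw h]

lemma nonempty_iso_pathGraph_or_cycleGraph (hclaw : _root_.Free claw G)
    (hT : ∀ p q r, G.Adj u p → G.Adj u q → G.Adj u r → G.Adj p q → G.Adj q r → ¬G.Adj p r)
    (hx : G.Adj u x) (hb : G.Adj u b) (ha : G.Adj u a) (hy : G.Adj u y) (hxb : G.Adj x b)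
    (hba : G.Adj b a) (hay : G.Adj a y) (nxa : ¬G.Adj x a) (nxy : ¬G.Adj x y)
    (nby : ¬G.Adj b y) :
    Nonempty (G.induce (G.neighborSet u) ≃g pathGraph 4) ∨
      Nonempty (G.induce (G.neighborSet u) ≃g cycleGraph 5) := by
  have hS : {x, b, a, y} ⊆ G.neighborSet u := by
    simp [Set.insert_subset_iff, hx, hb, ha, hy]
  rcases (subsingleton_neighborSet_diff_inducedPath hclaw hT hx hb ha hy hxb hay nxa nxy
    nby).eq_empty_or_singleton with hN | ⟨w, hN⟩
  · left
    rw [subset_antisymm (Set.sdiff_eq_empty.1 hN) hS]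
    exact nonempty_induce_iso_pathGraph_four hxb hba hay nxa nxy nby
  · right
    obtain ⟨hw, hwS⟩ : w ∈ G.neighborSet u \ {x, b, a, y} := hN ▸ rfl
    obtain ⟨hwx, hwy, nwa, nwb⟩ :=
      adj_of_not_mem_inducedPath hclaw hT hx hb ha hy hxb hay nxa nxy nby hw hwS
    rw [← Set.sdiff_union_of_subset hS, hN, Set.singleton_union]
    exact nonempty_induce_iso_cycleGraph_five hwx hxb hba hay hwy.symm nwb nwa nxa nxy nby

end TriangleFreeNeighborhood

end

theorem stmt_16_general {V : Type*} (G : SimpleGraph V)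
    (hclaw : _root_.Free claw G) (hkk : _root_.Free kkJoin G) (u : V)
    (Q : Finset V) (hQclique : G.IsClique ↑Q) (hQsub : ↑Q ⊆ G.neighborSet u)
    (hQmax : ∀ Q' : Finset V, G.IsClique ↑Q' → ↑Q' ⊆ G.neighborSet u → Q'.card ≤ Q.card)
    (R : Set V) (hR : R = G.neighborSet u \ ↑Q)
    (hnc : ¬ Nonempty (G.induce (G.neighborSet u) ≃g cycleGraph 5))
    (hnp : ¬ Nonempty (G.induce (G.neighborSet u) ≃g pathGraph 4)) :
    G.IsClique R := by
  classical
  subst hR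
  intro x ⟨hx, hxQ⟩ y ⟨hy, hyQ⟩ hxy
  by_contra nxy
  obtain ⟨a, ha, b, hb, hxb, hba, hay, nxa, nby, hQab⟩ :=
    exists_inducedPath_of_not_adj hclaw hkk hQclique hQsub hQmax hx hy hxQ hyQ hxy nxy
  have hT := not_adj_of_card_le_two hQmax ((Finset.card_le_card hQab).trans Finset.card_le_two)
  rcases nonempty_iso_pathGraph_or_cycleGraph hclaw hT hx (hQsub hb) (hQsub ha) hy hxb hba hay
    nxa nxy nby with h | h
  exacts [hnp h, hnc h]

theorem stmt_16 {V : Type*} [Fintype V] (G : SimpleGraph V)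
    (hclaw : _root_.Free claw G) (hkk : _root_.Free kkJoin G) (u : V)
    (Q : Finset V) (hQclique : G.IsClique ↑Q) (hQsub : ↑Q ⊆ G.neighborSet u)
    (hQmax : ∀ Q' : Finset V, G.IsClique ↑Q' → ↑Q' ⊆ G.neighborSet u → Q'.card ≤ Q.card)
    (R : Set V) (hR : R = G.neighborSet u \ ↑Q)
    (hnc : ¬ Nonempty (G.induce (G.neighborSet u) ≃g cycleGraph 5))
    (hnp : ¬ Nonempty (G.induce (G.neighborSet u) ≃g pathGraph 4)) :
    G.IsClique R :=
  stmt_16_general G hclaw hkk u Q hQclique hQsub hQmax R hR hnc hnp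
end

section
/- Let G be a finite simple graph that is K_{1,3}-free and ((K_2 ∪ K_1) + K_2)-free, and let u be a vertex. Then deg(u) ≤ 2ω(⟨N̄(u)⟩) − 2 unless the induced subgraph on N(u) is a 5-cycle, in which case deg(u) = 5 and ω(⟨N̄(u)⟩) = 3. -/
open SimpleGraph

/-!
Let `H` be the graph induced on `N(u)`. Claw-freeness says that the complement `Hᶜ` is
triangle-free, and `((K₂ ∪ K₁) + K₂)`-freeness says that `H` has no induced paw. Together they give:
if `x ~ y` in `H`, then `y` is `Hᶜ`-adjacent to all but at most one `Hᶜ`-neighbour of `x`.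

Consequently `Hᶜ` has maximum degree at most one inside each `H`-neighbourhood `N_H(w)`, so
`N_H(w)` contains a clique of half its size and `deg_H w + 2 ≤ 2ω(H)`; and if `w` has `Hᶜ`-degree
at least three then `N_H[w]` is a clique, so `|H| ≤ 2ω(H)`. Hence `|H| > 2ω(H)` forces `Hᶜ` to
be 2-regular with `|H| = 2ω(H) + 1`. Then, if `a, b` are the `Hᶜ`-neighbours of a vertex `w`,
every `H`-neighbour of `w` is the other `Hᶜ`-neighbour `a'` of `a` or `b'` of `b`; so `|H| = 5` and
`w, b', a, b, a'` is a 5-cycle of `H`. Finally `ω(⟨N̄(u)⟩) = ω(H) + 1`.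
-/

namespace SimpleGraph

open Finset

section

variable {α β : Type*} {G : SimpleGraph α} {H : SimpleGraph β}

lemma IsClique.card_le_cliqueNum_induce [Finite α] {s : Set α} {t : Finset α}
    (ht : G.IsClique (t : Set α)) (hts : (t : Set α) ⊆ s) : #t ≤ (G.induce s).cliqueNum := by
  classical
  have hc : (G.induce s).IsNClique #t (t.subtype (· ∈ s)) := by
    rw [isNClique_induce_iff, subtype_map_of_mem fun x hx => hts hx]
    exact ⟨ht, rfl⟩
  exact hc.card_eq ▸ hc.isClique.card_le_cliqueNum

lemma exists_isNClique_cliqueNum_induce (s : Set α) :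
    ∃ t : Finset α, (t : Set α) ⊆ s ∧ G.IsNClique (G.induce s).cliqueNum t := by
  obtain ⟨t, ht⟩ := (G.induce s).exists_isNClique_cliqueNum
  rw [isNClique_induce_iff] at ht
  exact ⟨_, by simp, ht⟩

lemma cliqueNum_induce_insert_neighborSet [Finite α] (u : α) :
    (G.induce (insert u (G.neighborSet u))).cliqueNum =
      (G.induce (G.neighborSet u)).cliqueNum + 1 := by
  classical
  apply le_antisymm
  · obtain ⟨t, hts, ht⟩ := G.exists_isNClique_cliqueNum_induce (insert u (G.neighborSet u))
    have herase : ((t.erase u : Finset α) : Set α) ⊆ G.neighborSet u := by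
      rw [coe_erase, Set.sdiff_singleton_subset_iff]
      exact hts
    have := (ht.isClique.subset (by simp)).card_le_cliqueNum_induce herase
    have := pred_card_le_card_erase (s := t) (a := u)
    have := ht.card_eq
    omega
  · obtain ⟨t, hts, ht⟩ := G.exists_isNClique_cliqueNum_induce (G.neighborSet u)
    have hu : u ∉ t := fun h => G.loopless.irrefl u (hts h)
    rw [← ht.card_eq, ← card_insert_of_notMem hu]
    refine IsClique.card_le_cliqueNum_induce ?_ ?_
    · rw [coe_insert]
      exact ht.isClique.insert fun b hb _ => hts hb
    · rw [coe_insert]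
      exact Set.insert_subset_insert hts

lemma exists_isIndepSet_subset_card_le_two_mul [DecidableEq α] (s : Finset α)
    (hs : ∀ x ∈ s, ∀ y ∈ s, ∀ z ∈ s, G.Adj x y → G.Adj x z → y = z) :
    ∃ t ⊆ s, G.IsIndepSet (t : Set α) ∧ #s ≤ 2 * #t := by
  classical
  induction s using Finset.strongInduction with
  | H s ih =>
  obtain rfl | ⟨x, hx⟩ := s.eq_empty_or_nonempty
  · exact ⟨∅, empty_subset _, by simp, by simp⟩
  set r := s.filter fun y => y ≠ x ∧ ¬G.Adj x y
  have hrs : r ⊂ s := filter_ssubset.2 ⟨x, hx, by simp⟩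
  obtain ⟨t, htr, ht, hcard⟩ := ih r hrs fun a ha b hb c hc =>
    hs a (hrs.subset ha) b (hrs.subset hb) c (hrs.subset hc)
  have hxt : x ∉ t := fun h => by simpa [r] using htr h
  refine ⟨insert x t, insert_subset hx (htr.trans hrs.subset), ?_, ?_⟩
  · rw [coe_insert]
    refine ht.insert fun y hy _ => ?_
    have hy : ¬G.Adj x y := (mem_filter.1 (htr hy)).2.2
    exact ⟨hy, fun h => hy h.symm⟩
  · have hnbr : #(s.filter (G.Adj x)) ≤ 1 :=
      card_le_one.2 fun y hy z hz => hs x hx y (mem_filter.1 hy).1 z (mem_filter.1 hz).1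
        (mem_filter.1 hy).2 (mem_filter.1 hz).2
    have hrest : s.filter (fun y => ¬(y ≠ x ∧ ¬G.Adj x y)) ⊆ insert x (s.filter (G.Adj x)) := by
      intro y hy
      simp only [mem_filter, mem_insert] at hy ⊢
      tauto
    have := card_le_card hrest
    have := card_insert_le x (s.filter (G.Adj x))
    have : #r + #(s.filter fun y => ¬(y ≠ x ∧ ¬G.Adj x y)) = #s :=
      card_filter_add_card_filter_not _
    rw [card_insert_of_notMem hxt]
    omega

lemma exists_neighborFinset_eq_pair [DecidableEq α] {v w : α} [Fintype (G.neighborSet v)]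
    (hv : G.degree v = 2) (hvw : G.Adj v w) : ∃ w', w' ≠ w ∧ G.neighborFinset v = {w, w'} := by
  obtain ⟨p, q, hpq, he⟩ := card_eq_two.1 hv
  have hw : w = p ∨ w = q := by simpa [he] using (G.mem_neighborFinset _ _).2 hvw
  rcases hw with rfl | rfl
  exacts [⟨q, hpq.symm, he⟩, ⟨p, hpq, he.trans (pair_comm _ _)⟩]

theorem Hom.adj_iff_of_degree_le [DecidableEq β] [G.LocallyFinite] [H.LocallyFinite]
    (f : G →g H) (hf : Function.Injective f) (hdeg : ∀ v, H.degree (f v) ≤ G.degree v)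
    {v w : α} : H.Adj (f v) (f w) ↔ G.Adj v w := by
  refine ⟨fun h => ?_, f.map_adj⟩
  have himage : (G.neighborFinset v).image f = H.neighborFinset (f v) := by
    refine eq_of_subset_of_card_le (image_subset_iff.2 fun x hx => ?_) ?_
    · exact (H.mem_neighborFinset _ _).2 (f.map_adj ((G.mem_neighborFinset _ _).1 hx))
    · rw [card_image_of_injective _ hf]
      exact hdeg v
  obtain ⟨x, hx, hxw⟩ := mem_image.1 (himage ▸ (H.mem_neighborFinset _ _).2 h)
  exact hf hxw ▸ (G.mem_neighborFinset _ _).1 hx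

def cycleGraphHom {n : ℕ} (f : Fin (n + 2) → β) (hf : ∀ i, H.Adj (f i) (f (i + 1))) :
    cycleGraph (n + 2) →g H where
  toFun := f
  map_rel' {i j} h := by
    rcases cycleGraph_adj.1 h with h | h
    · rw [sub_eq_iff_eq_add'] at h
      exact h ▸ (hf j).symm
    · rw [sub_eq_iff_eq_add'] at h
      exact h ▸ hf i

theorem nonempty_iso_cycleGraph [Fintype β] [DecidableEq β] [DecidableRel H.Adj] {n : ℕ}
    (f : Fin (n + 3) → β) (hf : Function.Injective f) (hcard : Fintype.card β = n + 3)
    (hadj : ∀ i, H.Adj (f i) (f (i + 1))) (hreg : H.IsRegularOfDegree 2) :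
    Nonempty (H ≃g cycleGraph (n + 3)) := by
  have hbij : Function.Bijective f :=
    (Fintype.bijective_iff_injective_and_card f).2 ⟨hf, by simp [hcard]⟩
  exact ⟨Iso.symm ⟨Equiv.ofBijective f hbij, (cycleGraphHom f hadj).adj_iff_of_degree_le hf
    fun _ => (hreg _).trans_le cycleGraph_degree_three_le.ge⟩⟩

lemma nonempty_iso_cycleGraph_five_s17 [Fintype β] [DecidableEq β] [DecidableRel H.Adj]
    (hcard : Fintype.card β = 5) (hreg : H.IsRegularOfDegree 2) {v₀ v₁ v₂ v₃ v₄ : β}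
    (h₀₁ : H.Adj v₀ v₁) (h₁₂ : H.Adj v₁ v₂) (h₂₃ : H.Adj v₂ v₃) (h₃₄ : H.Adj v₃ v₄)
    (h₄₀ : H.Adj v₄ v₀) (h₀₂ : v₀ ≠ v₂) (h₀₃ : v₀ ≠ v₃) (h₁₃ : v₁ ≠ v₃) (h₁₄ : v₁ ≠ v₄)
    (h₂₄ : v₂ ≠ v₄) : Nonempty (H ≃g cycleGraph 5) := by
  refine nonempty_iso_cycleGraph ![v₀, v₁, v₂, v₃, v₄] ?_ hcard (fun i => ?_) hreg
  · intro i j hij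
    fin_cases i <;> fin_cases j <;> simp_all
  · fin_cases i
    exacts [h₀₁, h₁₂, h₂₃, h₃₄, h₄₀]

end

section

variable {W : Type*} {H : SimpleGraph W}

/-- `H` has no induced paw, i.e. no triangle `wab` with a pendant edge `wc`. -/
def PawFree (H : SimpleGraph W) : Prop :=
  ∀ ⦃w a b c⦄, H.Adj w a → H.Adj w b → H.Adj w c → H.Adj a b → ¬H.Adj a c → ¬H.Adj b c → False

lemma adj_of_not_compl_adj {x y : W} (hxy : x ≠ y) (h : ¬Hᶜ.Adj x y) : H.Adj x y := by
  simpa [compl_adj, hxy] using h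

lemma PawFree.compl_adj_or_compl_adj (hpaw : H.PawFree) (htri : Hᶜ.CliqueFree 3)
    {x y z₁ z₂ : W} (hxy : H.Adj x y) (h₁ : Hᶜ.Adj x z₁) (h₂ : Hᶜ.Adj x z₂) (hz : z₁ ≠ z₂) :
    Hᶜ.Adj y z₁ ∨ Hᶜ.Adj y z₂ := by
  classical
  by_contra! h
  have hy₁ : H.Adj y z₁ := adj_of_not_compl_adj (fun e => h₁.2 (e ▸ hxy)) h.1
  have hy₂ : H.Adj y z₂ := adj_of_not_compl_adj (fun e => h₂.2 (e ▸ hxy)) h.2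
  by_cases h₁₂ : H.Adj z₁ z₂
  · exact hpaw hy₁ hy₂ hxy.symm h₁₂ (fun h => h₁.2 h.symm) (fun h => h₂.2 h.symm)
  · exact htri {x, z₁, z₂} (is3Clique_triple_iff.2 ⟨h₁, h₂, hz, h₁₂⟩)

variable [Fintype W] [DecidableEq W] [DecidableRel H.Adj]

lemma degree_add_compl_degree (w : W) : H.degree w + Hᶜ.degree w + 1 = Fintype.card W := by
  have := H.degree_lt_card_verts w
  rw [degree_compl]
  omega

lemma card_filter_not_compl_adj_le_one (hpaw : H.PawFree) (htri : Hᶜ.CliqueFree 3) {w x : W}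
    (hwx : H.Adj w x) : #((Hᶜ.neighborFinset w).filter fun z => ¬Hᶜ.Adj x z) ≤ 1 := by
  refine card_le_one.2 fun z₁ hz₁ z₂ hz₂ => ?_
  simp only [mem_filter, mem_neighborFinset] at hz₁ hz₂
  by_contra hz
  exact (hpaw.compl_adj_or_compl_adj htri hwx hz₁.1 hz₂.1 hz).elim hz₁.2 hz₂.2

lemma degree_add_two_le_two_mul_cliqueNum (hpaw : H.PawFree) (htri : Hᶜ.CliqueFree 3) (w : W) :
    H.degree w + 2 ≤ 2 * H.cliqueNum := by
  obtain ⟨t, hts, ht, hcard⟩ := exists_isIndepSet_subset_card_le_two_mul (G := Hᶜ)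
    (H.neighborFinset w) fun x hx y hy z hz hxy hxz => by
      rw [mem_neighborFinset] at hx hy hz
      by_contra hyz
      rcases hpaw.compl_adj_or_compl_adj htri hx.symm hxy hxz hyz with h | h
      exacts [h.2 hy, h.2 hz]
  have hwt : w ∉ t := fun h => H.loopless.irrefl w ((H.mem_neighborFinset _ _).1 (hts h))
  have hclique : H.IsClique (insert w t : Finset W) := by
    rw [coe_insert]
    exact (H.isIndepSet_compl.1 ht).insert fun y hy _ => (H.mem_neighborFinset _ _).1 (hts hy)
  have := hclique.card_le_cliqueNum
  rw [card_insert_of_notMem hwt] at this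
  rw [← card_neighborFinset_eq_degree]
  omega

lemma isClique_insert_neighborFinset_of_three_le_compl_degree (hpaw : H.PawFree)
    (htri : Hᶜ.CliqueFree 3) {w : W} (hw : 3 ≤ Hᶜ.degree w) :
    H.IsClique (insert w (H.neighborFinset w) : Finset W) := by
  rw [coe_insert]
  refine IsClique.insert (fun x hx y hy hxy => ?_) fun x hx _ => (H.mem_neighborFinset _ _).1 hx
  by_contra hnxy
  rw [mem_coe, mem_neighborFinset] at hx hy
  have hx₁ := card_filter_not_compl_adj_le_one hpaw htri hx
  have hy₁ := card_filter_not_compl_adj_le_one hpaw htri hy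
  obtain ⟨z, hzA, hz⟩ := exists_mem_notMem_of_card_lt_card (t := Hᶜ.neighborFinset w)
    (s := (Hᶜ.neighborFinset w).filter (fun z => ¬Hᶜ.Adj x z) ∪
      (Hᶜ.neighborFinset w).filter fun z => ¬Hᶜ.Adj y z) <| by
    grw [card_union_le, hx₁, hy₁, card_neighborFinset_eq_degree]
    omega
  simp only [mem_union, mem_filter, not_or, not_and, not_not] at hz
  exact htri {x, y, z} (is3Clique_triple_iff.2 ⟨⟨hxy, hnxy⟩, (hz.1 hzA), (hz.2 hzA)⟩)

lemma card_le_two_mul_cliqueNum_of_three_le_compl_degree (hpaw : H.PawFree)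
    (htri : Hᶜ.CliqueFree 3) {w : W} (hw : 3 ≤ Hᶜ.degree w) :
    Fintype.card W ≤ 2 * H.cliqueNum := by
  have hN :=
    (isClique_insert_neighborFinset_of_three_le_compl_degree hpaw htri hw).card_le_cliqueNum
  have hA : Hᶜ.degree w ≤ H.cliqueNum := by
    rw [← card_neighborFinset_eq_degree]
    refine (H.isIndepSet_compl.1 ?_).card_le_cliqueNum
    simpa using Hᶜ.isIndepSet_neighborSet_of_triangleFree htri w
  rw [card_insert_of_notMem (notMem_neighborFinset_self H w), card_neighborFinset_eq_degree] at hN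
  have := degree_add_compl_degree (H := H) w
  omega

lemma adj_of_compl_neighborFinset_eq_pair {a w a' x : W} (ha : Hᶜ.neighborFinset a = {w, a'})
    (hxa : x ≠ a) (hxw : x ≠ w) (hxa' : x ≠ a') : H.Adj x a :=
  adj_of_not_compl_adj hxa fun h => by
    simpa [ha, hxw, hxa'] using (mem_neighborFinset _ _ _).2 h.symm

lemma neighborFinset_subset_of_compl_neighborFinset_eq_pair (hpaw : H.PawFree)
    (htri : Hᶜ.CliqueFree 3) {w a b a' b' : W} (hwa : Hᶜ.Adj w a) (hwb : Hᶜ.Adj w b)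
    (hab : a ≠ b) (ha : Hᶜ.neighborFinset a = {w, a'}) (hb : Hᶜ.neighborFinset b = {w, b'}) :
    H.neighborFinset w ⊆ {a', b'} := by
  intro x hx
  rw [mem_neighborFinset] at hx
  rcases hpaw.compl_adj_or_compl_adj htri hx hwa hwb hab with h | h
  · have : x = w ∨ x = a' := by simpa [ha] using (mem_neighborFinset _ _ _).2 h.symm
    simp [this.resolve_left hx.ne']
  · have : x = w ∨ x = b' := by simpa [hb] using (mem_neighborFinset _ _ _).2 h.symm
    simp [this.resolve_left hx.ne']

lemma iso_cycleGraph_five_of_isRegularOfDegree_compl (hpaw : H.PawFree)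
    (htri : Hᶜ.CliqueFree 3) (hreg : Hᶜ.IsRegularOfDegree 2)
    (hcard : 2 * H.cliqueNum < Fintype.card W) :
    Nonempty (H ≃g cycleGraph 5) ∧ Fintype.card W = 5 ∧ H.cliqueNum = 2 := by
  have hdeg (v : W) : H.degree v + 3 = Fintype.card W := by
    have := degree_add_compl_degree (H := H) v
    rw [hreg v] at this
    omega
  obtain ⟨w⟩ : Nonempty W := Fintype.card_pos_iff.1 (by omega)
  obtain ⟨a, b, hab, hw⟩ := card_eq_two.1 ((card_neighborFinset_eq_degree _ _).trans (hreg w))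
  have hwa : Hᶜ.Adj w a := (mem_neighborFinset _ _ _).1 (by simp [hw])
  have hwb : Hᶜ.Adj w b := (mem_neighborFinset _ _ _).1 (by simp [hw])
  have hHab : H.Adj a b :=
    adj_of_not_compl_adj hab fun h => htri {w, a, b} (is3Clique_triple_iff.2 ⟨hwa, hwb, h⟩)
  have hω : 2 ≤ H.cliqueNum := by
    have hclique : H.IsClique (({a, b} : Finset W) : Set W) := by
      rw [coe_pair]
      exact H.isClique_pair.2 fun _ => hHab
    simpa [card_pair hab] using hclique.card_le_cliqueNum
  obtain ⟨a', ha'w, ha⟩ := exists_neighborFinset_eq_pair (hreg a) hwa.symm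
  obtain ⟨b', hb'w, hb⟩ := exists_neighborFinset_eq_pair (hreg b) hwb.symm
  have hN : H.neighborFinset w = {a', b'} :=
    eq_of_subset_of_card_le
      (neighborFinset_subset_of_compl_neighborFinset_eq_pair hpaw htri hwa hwb hab ha hb) <| by
        grw [card_le_two, card_neighborFinset_eq_degree]
        have := hdeg w
        omega
  have hcard₂ : #({a', b'} : Finset W) = H.degree w := by
    rw [← hN, card_neighborFinset_eq_degree]
  have := hdeg w
  have := card_le_two (a := a') (b := b')
  have h5 : Fintype.card W = 5 := by omega
  have ha'b' : a' ≠ b' := by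
    rintro rfl
    simp at hcard₂
    omega
  have hwb' : H.Adj w b' := (mem_neighborFinset _ _ _).1 (by simp [hN])
  have hwa' : H.Adj w a' := (mem_neighborFinset _ _ _).1 (by simp [hN])
  have haa' : Hᶜ.Adj a a' := (mem_neighborFinset _ _ _).1 (by simp [ha])
  have hbb' : Hᶜ.Adj b b' := (mem_neighborFinset _ _ _).1 (by simp [hb])
  have hb'a := adj_of_compl_neighborFinset_eq_pair ha (fun h => hwa.2 (h ▸ hwb')) hb'w ha'b'.symm
  have ha'b := adj_of_compl_neighborFinset_eq_pair hb (fun h => hwb.2 (h ▸ hwa')) ha'w ha'b'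
  refine ⟨nonempty_iso_cycleGraph_five_s17 h5 (fun v => ?_) hwb' hb'a hHab ha'b.symm hwa'.symm
    hwa.ne hwb.ne hbb'.ne' ha'b'.symm haa'.ne, h5, by omega⟩
  have := hdeg v
  omega

theorem card_le_two_mul_cliqueNum_or_iso_cycleGraph_five (hpaw : H.PawFree)
    (htri : Hᶜ.CliqueFree 3) :
    Fintype.card W ≤ 2 * H.cliqueNum ∨
      (Nonempty (H ≃g cycleGraph 5) ∧ Fintype.card W = 5 ∧ H.cliqueNum = 2) := by
  refine or_iff_not_imp_left.2 fun hcard =>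
    iso_cycleGraph_five_of_isRegularOfDegree_compl hpaw htri (fun w => ?_) (not_le.1 hcard)
  have := degree_add_two_le_two_mul_cliqueNum hpaw htri w
  have := degree_add_compl_degree (H := H) w
  have : ¬3 ≤ Hᶜ.degree w := fun h =>
    hcard (card_le_two_mul_cliqueNum_of_three_le_compl_degree hpaw htri h)
  omega

end

section

variable {V : Type*} {G : SimpleGraph V}

lemma compl_induce_neighborSet_cliqueFree_three (h : _root_.Free claw G) (u : V) :
    (G.induce (G.neighborSet u))ᶜ.CliqueFree 3 := by
  classical
  intro t ht
  obtain ⟨⟨x, hx⟩, ⟨y, hy⟩, ⟨z, hz⟩, -, -, -, rfl⟩ := card_eq_three.1 ht.card_eq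
  obtain ⟨⟨hxy, nxy⟩, ⟨hxz, nxz⟩, ⟨hyz, nyz⟩⟩ := is3Clique_triple_iff.1 ht
  simp only [ne_eq, Subtype.mk.injEq, comap_adj, Function.Embedding.subtype_apply]
    at hxy nxy hxz nxz hyz nyz
  rw [mem_neighborSet] at hx hy hz
  have hinj : Function.Injective (Sum.elim (fun _ : Fin 1 => u) ![x, y, z]) := by
    rintro (i | i) (j | j) hij <;> fin_cases i <;> try fin_cases j
    all_goals simp_all
  refine h.false ⟨⟨_, hinj⟩, ?_⟩
  rintro (i | i) (j | j) <;> fin_cases i <;> try fin_cases j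
  all_goals simp [claw, hx, hy, hz, nxy, nxz, nyz, adj_comm]

lemma induce_neighborSet_pawFree (h : _root_.Free kkJoin G) (u : V) :
    (G.induce (G.neighborSet u)).PawFree := by
  rintro ⟨w, hw⟩ ⟨a, ha⟩ ⟨b, hb⟩ ⟨c, hc⟩ hwa hwb hwc hab nac nbc
  simp only [comap_adj, Function.Embedding.subtype_apply] at hwa hwb hwc hab nac nbc
  rw [mem_neighborSet] at hw ha hb hc
  have hac : a ≠ c := fun e => nbc (e ▸ hab.symm)
  have hbc : b ≠ c := fun e => nac (e ▸ hab)
  have hinj : Function.Injective ![a, b, c, u, w] := by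
    intro i j hij
    fin_cases i <;> fin_cases j <;> simp_all
  refine h.false ⟨⟨_, hinj⟩, fun {i j} => ?_⟩
  fin_cases i <;> fin_cases j <;>
    simp [kkJoin, hwa, hwb, hwc, hab, nac, nbc, hw, ha, hb, hc, adj_comm]

end

end SimpleGraph

theorem stmt_17 {V : Type*} [Fintype V] (G : SimpleGraph V)
    (hclaw : _root_.Free claw G) (hkk : _root_.Free kkJoin G) (u : V) :
    deg G u ≤ 2 * (G.induce (insert u (G.neighborSet u))).cliqueNum - 2 ∨
    (Nonempty (G.induce (G.neighborSet u) ≃g cycleGraph 5) ∧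
      deg G u = 5 ∧ (G.induce (insert u (G.neighborSet u))).cliqueNum = 3) := by
  classical
  have hdeg : deg G u = Fintype.card (G.neighborSet u) := by
    rw [deg, card_neighborSet_eq_degree]
  rw [hdeg, cliqueNum_induce_insert_neighborSet]
  rcases card_le_two_mul_cliqueNum_or_iso_cycleGraph_five (induce_neighborSet_pawFree hkk u)
    (compl_induce_neighborSet_cliqueFree_three hclaw u) with h | ⟨hiso, h5, hω⟩
  · exact Or.inl (by omega)
  · exact Or.inr ⟨hiso, h5, by omega⟩
end
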